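/- arXiv:2605.05958 — 6 statements merged into one kernel-verified Lean document; each statement's English description precedes it below -/
import Mathlib

section
/- Under the DR estimator setup, the expectation of the DR estimator over the observation variables equals E[R̂_DR] = (1/N) Σ_{i∈D} [ e_i · (p_i/p̂_i) + ê_i · (1 − p_i/p̂_i) ]; equivalently, E[R̂_DR] − R_true = −(1/N) Σ_{i∈D} Δ_i · δ_i. -/
open MeasureTheory ProbabilityTheory

/-! By linearity of expectation and `E[o_i] = P(o_i = 1) = p_i`, each summand
`ê_i + (o_i / p̂_i) δ_i` has expectation `ê_i + (p_i / p̂_i) δ_i`; both identities are then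
termwise algebra. -/

lemma eq_indicator_one_of_eq_zero_or_one {Ω : Type*} {f : Ω → ℝ}
    (h01 : ∀ ω, f ω = 0 ∨ f ω = 1) : f = {ω | f ω = 1}.indicator 1 := by
  funext ω
  rcases h01 ω with h | h <;> simp [h]

section ZeroOneValued

variable {Ω : Type*} [MeasurableSpace Ω] {μ : Measure Ω} {f : Ω → ℝ}

lemma integrable_of_eq_zero_or_one [IsFiniteMeasure μ] (hf : Measurable f)
    (h01 : ∀ ω, f ω = 0 ∨ f ω = 1) : Integrable f μ := by
  rw [eq_indicator_one_of_eq_zero_or_one h01]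
  exact (integrable_const 1).indicator (hf (measurableSet_singleton 1))

lemma integral_eq_measureReal_of_eq_zero_or_one (hf : Measurable f)
    (h01 : ∀ ω, f ω = 0 ∨ f ω = 1) : ∫ ω, f ω ∂μ = μ.real {ω | f ω = 1} := by
  conv_lhs => rw [eq_indicator_one_of_eq_zero_or_one h01]
  exact integral_indicator_one (hf (measurableSet_singleton 1))

end ZeroOneValued

lemma integral_const_add_div_mul {Ω : Type*} [MeasurableSpace Ω] {μ : Measure Ω}
    [IsProbabilityMeasure μ] {f : Ω → ℝ} (hf : Integrable f μ) (a b c : ℝ) :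
    ∫ ω, (a + f ω / c * b) ∂μ = a + (∫ ω, f ω ∂μ) / c * b := by
  rw [integral_add (integrable_const a) ((hf.div_const c).mul_const b), integral_const,
    integral_mul_const, integral_div, probReal_univ, one_smul]

theorem dr_estimator_expectation_general
    {Ω : Type*} [MeasurableSpace Ω] (P : Measure Ω) [IsProbabilityMeasure P]
    {ι : Type*} [Fintype ι] (N : ℕ)
    (e ehat p phat : ι → ℝ)
    (o : ι → Ω → ℝ) (ho_meas : ∀ i, Measurable (o i))
    (ho01 : ∀ i ω, o i ω = 0 ∨ o i ω = 1)
    (hprob : ∀ i, (P {ω | o i ω = 1}).toReal = p i) :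
    (∫ ω, (1 / (N : ℝ)) * ∑ i, (ehat i + o i ω / phat i * (e i - ehat i)) ∂P)
        = (1 / (N : ℝ)) * ∑ i, (e i * (p i / phat i) + ehat i * (1 - p i / phat i))
      ∧
    (∫ ω, (1 / (N : ℝ)) * ∑ i, (ehat i + o i ω / phat i * (e i - ehat i)) ∂P)
        - (1 / (N : ℝ)) * ∑ i, e i
      = -((1 / (N : ℝ)) * ∑ i, (1 - p i / phat i) * (e i - ehat i)) := by
  have ho_int : ∀ i, Integrable (o i) P := fun i =>
    integrable_of_eq_zero_or_one (ho_meas i) (ho01 i)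
  have ho_mean : ∀ i, ∫ ω, o i ω ∂P = p i := fun i => by
    rw [integral_eq_measureReal_of_eq_zero_or_one (ho_meas i) (ho01 i), measureReal_def, hprob]
  have h_expect : (∫ ω, (1 / (N : ℝ)) * ∑ i, (ehat i + o i ω / phat i * (e i - ehat i)) ∂P)
      = (1 / (N : ℝ)) * ∑ i, (ehat i + p i / phat i * (e i - ehat i)) := by
    have hterm_int : ∀ i, Integrable (fun ω => ehat i + o i ω / phat i * (e i - ehat i)) P :=
      fun i => (integrable_const _).add (((ho_int i).div_const _).mul_const _)
    rw [integral_const_mul, integral_finsetSum _ fun i _ => hterm_int i]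
    simp only [integral_const_add_div_mul (ho_int _), ho_mean]
  rw [h_expect, ← mul_sub, ← Finset.sum_sub_distrib, ← mul_neg, ← Finset.sum_neg_distrib]
  exact ⟨congrArg _ (Finset.sum_congr rfl fun i _ => by ring),
    congrArg _ (Finset.sum_congr rfl fun i _ => by ring)⟩

/-- Under the DR estimator setup, the expectation of the DR estimator
over the observation variables equals
`E[R̂_DR] = (1/N) Σ_i [ e_i (p_i/p̂_i) + ê_i (1 − p_i/p̂_i) ]`; equivalently,
`E[R̂_DR] − R_true = −(1/N) Σ_i Δ_i δ_i` where `δ_i = e_i − ê_i`, `Δ_i = 1 − p_i/p̂_i`. -/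
theorem dr_estimator_expectation
    {Ω : Type*} [MeasurableSpace Ω] (P : Measure Ω) [IsProbabilityMeasure P]
    {ι : Type*} [Fintype ι] (N : ℕ) (hN : 1 ≤ N) (hcard : Fintype.card ι = N)
    (e ehat p phat : ι → ℝ)
    (hp : ∀ i, p i ∈ Set.Icc (0 : ℝ) 1)
    (hphat : ∀ i, phat i ∈ Set.Ioc (0 : ℝ) 1)
    (o : ι → Ω → ℝ) (ho_meas : ∀ i, Measurable (o i))
    (ho01 : ∀ i ω, o i ω = 0 ∨ o i ω = 1)
    (hindep : iIndepFun o P)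
    (hprob : ∀ i, (P {ω | o i ω = 1}).toReal = p i) :
    (∫ ω, (1 / (N : ℝ)) * ∑ i, (ehat i + o i ω / phat i * (e i - ehat i)) ∂P)
        = (1 / (N : ℝ)) * ∑ i, (e i * (p i / phat i) + ehat i * (1 - p i / phat i))
      ∧
    (∫ ω, (1 / (N : ℝ)) * ∑ i, (ehat i + o i ω / phat i * (e i - ehat i)) ∂P)
        - (1 / (N : ℝ)) * ∑ i, e i
      = -((1 / (N : ℝ)) * ∑ i, (1 - p i / phat i) * (e i - ehat i)) :=
  dr_estimator_expectation_general P N e ehat p phat o ho_meas ho01 hprob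
end

section
/- (Bias of the DR estimator.) Under the DR estimator setup, the bias of the DR estimator is bounded by the product of the errors of the two auxiliary models: | E[R̂_DR] − R_true | ≤ (1/N) Σ_{i∈D} | Δ_i · δ_i |. -/
/-!
By linearity of expectation, `E[R̂_DR]` is obtained by replacing each `o i` by its mean
`p i`, so the bias is the average of `ê_i + (p_i / p̂_i) δ_i - e_i = -Δ_i δ_i`; the bound is the
triangle inequality.
-/

open MeasureTheory ProbabilityTheory

lemma Set.eq_indicator_one_of_forall_eq_zero_or_one {Ω : Type*} {X : Ω → ℝ}
    (hX : ∀ ω, X ω = 0 ∨ X ω = 1) : X = {ω | X ω = 1}.indicator 1 := by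
  funext ω
  rcases hX ω with h | h <;> simp [h]

namespace MeasureTheory

variable {Ω : Type*} [MeasurableSpace Ω] {μ : Measure Ω} {X : Ω → ℝ}

lemma integrable_of_forall_eq_zero_or_one [IsFiniteMeasure μ] (hXm : Measurable X)
    (hX : ∀ ω, X ω = 0 ∨ X ω = 1) : Integrable X μ := by
  rw [Set.eq_indicator_one_of_forall_eq_zero_or_one hX]
  exact (integrable_const 1).indicator (hXm (measurableSet_singleton 1))

lemma integral_eq_measureReal_of_forall_eq_zero_or_one (hXm : Measurable X)
    (hX : ∀ ω, X ω = 0 ∨ X ω = 1) : ∫ ω, X ω ∂μ = μ.real {ω | X ω = 1} := by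
  conv_lhs => rw [Set.eq_indicator_one_of_forall_eq_zero_or_one hX]
  exact integral_indicator_one (hXm (measurableSet_singleton 1))

lemma integral_const_add_div_mul [IsProbabilityMeasure μ] (hX : Integrable X μ) (a b c : ℝ) :
    ∫ ω, (a + X ω / c * b) ∂μ = a + (∫ ω, X ω ∂μ) / c * b := by
  simp_rw [div_mul_eq_mul_div]
  rw [integral_add (integrable_const a) ((hX.mul_const b).div_const c), integral_div,
    integral_mul_const, integral_const, probReal_univ, one_smul]

lemma integral_doublyRobust {ι : Type*} [Fintype ι] [IsProbabilityMeasure μ]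
    (c : ℝ) (e ehat p phat : ι → ℝ) (o : ι → Ω → ℝ) (hint : ∀ i, Integrable (o i) μ)
    (hmean : ∀ i, ∫ ω, o i ω ∂μ = p i) :
    ∫ ω, c * ∑ i, (ehat i + o i ω / phat i * (e i - ehat i)) ∂μ
      = c * ∑ i, (ehat i + p i / phat i * (e i - ehat i)) := by
  have hterm_int i : Integrable (fun ω ↦ ehat i + o i ω / phat i * (e i - ehat i)) μ :=
    (integrable_const _).add (((hint i).div_const _).mul_const _)
  rw [integral_const_mul, integral_finsetSum _ fun i _ ↦ hterm_int i]
  congr 1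
  refine Finset.sum_congr rfl fun i _ ↦ ?_
  rw [integral_const_add_div_mul (hint i), hmean i]

end MeasureTheory

theorem dr_estimator_bias_bound_general
    {Ω : Type*} [MeasurableSpace Ω] (P : Measure Ω) [IsProbabilityMeasure P]
    {ι : Type*} [Fintype ι] (N : ℕ)
    (e ehat p phat : ι → ℝ)
    (o : ι → Ω → ℝ) (ho_meas : ∀ i, Measurable (o i))
    (ho01 : ∀ i ω, o i ω = 0 ∨ o i ω = 1)
    (hprob : ∀ i, (P {ω | o i ω = 1}).toReal = p i) :
    |(∫ ω, (1 / (N : ℝ)) * ∑ i, (ehat i + o i ω / phat i * (e i - ehat i)) ∂P)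
        - (1 / (N : ℝ)) * ∑ i, e i|
      ≤ (1 / (N : ℝ)) * ∑ i, |(1 - p i / phat i) * (e i - ehat i)| := by
  have hmean i : ∫ ω, o i ω ∂P = p i := by
    rw [integral_eq_measureReal_of_forall_eq_zero_or_one (ho_meas i) (ho01 i), ← hprob i,
      measureReal_def]
  rw [integral_doublyRobust _ e ehat p phat o
    (fun i ↦ integrable_of_forall_eq_zero_or_one (ho_meas i) (ho01 i)) hmean]
  have hbias : (1 / (N : ℝ)) * ∑ i, (ehat i + p i / phat i * (e i - ehat i))
      - (1 / (N : ℝ)) * ∑ i, e i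
      = (1 / (N : ℝ)) * ∑ i, -((1 - p i / phat i) * (e i - ehat i)) := by
    rw [← mul_sub, ← Finset.sum_sub_distrib]
    congr 1
    exact Finset.sum_congr rfl fun i _ ↦ by ring
  calc _ = (1 / (N : ℝ)) * |∑ i, -((1 - p i / phat i) * (e i - ehat i))| := by
        rw [hbias, abs_mul, abs_of_nonneg (by positivity)]
    _ ≤ (1 / (N : ℝ)) * ∑ i, |-((1 - p i / phat i) * (e i - ehat i))| := by
        gcongr
        exact Finset.abs_sum_le_sum_abs _ _
    _ = _ := by simp only [abs_neg]

/-- **Bias of the DR estimator.** Under the DR estimator setup, the bias of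
the DR estimator is bounded by the product of the errors of the two auxiliary models:
`| E[R̂_DR] − R_true | ≤ (1/N) Σ_i | Δ_i · δ_i |`,
where `δ_i = e_i − ê_i` and `Δ_i = 1 − p_i/p̂_i`. -/
theorem dr_estimator_bias_bound
    {Ω : Type*} [MeasurableSpace Ω] (P : Measure Ω) [IsProbabilityMeasure P]
    {ι : Type*} [Fintype ι] (N : ℕ) (hN : 1 ≤ N) (hcard : Fintype.card ι = N)
    (e ehat p phat : ι → ℝ)
    (hp : ∀ i, p i ∈ Set.Icc (0 : ℝ) 1)
    (hphat : ∀ i, phat i ∈ Set.Ioc (0 : ℝ) 1)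
    (o : ι → Ω → ℝ) (ho_meas : ∀ i, Measurable (o i))
    (ho01 : ∀ i ω, o i ω = 0 ∨ o i ω = 1)
    (hindep : iIndepFun o P)
    (hprob : ∀ i, (P {ω | o i ω = 1}).toReal = p i) :
    |(∫ ω, (1 / (N : ℝ)) * ∑ i, (ehat i + o i ω / phat i * (e i - ehat i)) ∂P)
        - (1 / (N : ℝ)) * ∑ i, e i|
      ≤ (1 / (N : ℝ)) * ∑ i, |(1 - p i / phat i) * (e i - ehat i)| :=
  dr_estimator_bias_bound_general P N e ehat p phat o ho_meas ho01 hprob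
end

section
/- (Generalization bound of the DR estimator.) Under the DR estimator setup with the hypothesis-class extension, write Δ_i = 1 − p_i/p̂_i. For every η ∈ (0,1), with probability at least 1 − η the following holds simultaneously for every h ∈ 𝓗: R_true(h) ≤ R̂_DR(h) + (1/N) Σ_{i∈D} | Δ_i · δ_i(h) | + sqrt( ln(2|𝓗|/η) / (2 N²) · Σ_{i∈D} ( δ_i(h)/p̂_i )² ). -/
open MeasureTheory ProbabilityTheory

/-!
Since `p̂ᵢ⁻¹ (pᵢ - oᵢ) + (1 - pᵢ / p̂ᵢ) + oᵢ / p̂ᵢ = 1`, the true risk splits exactly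
as the DR estimate, plus the bias term `(1/N) Σ Δᵢ δᵢ(h)`, plus the noise term
`(1/N) Σ aᵢ (pᵢ - oᵢ)` with `aᵢ = δᵢ(h) / p̂ᵢ`. The noise is a weighted sum of
independent centred Bernoulli variables, so by Hoeffding it exceeds `√(t/2 · Σ aᵢ²)`
with probability at most `exp (-t)`. Taking `t = ln (2|𝓗|/η)` and a union bound over
`𝓗` gives the claim.
-/

open Real Finset

section Hoeffding

variable {Ω ι : Type*} [MeasurableSpace Ω] {P : Measure Ω}

lemma integral_eq_measureReal_of_eq_zero_or_eq_one {X : Ω → ℝ} (hX : Measurable X)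
    (h01 : ∀ ω, X ω = 0 ∨ X ω = 1) : P[X] = P.real {ω | X ω = 1} := by
  have hX_eq : X = {ω | X ω = 1}.indicator 1 := by
    ext ω
    rcases h01 ω with h | h <;> simp [Set.indicator, h]
  conv_lhs => rw [hX_eq]
  exact integral_indicator_one (hX (measurableSet_singleton 1))

variable [IsProbabilityMeasure P]

theorem measureReal_sum_mul_centered_ge_le [Fintype ι] {X : ι → Ω → ℝ}
    (hX : ∀ i, AEMeasurable (X i) P)
    (hX01 : ∀ i, ∀ᵐ ω ∂P, X i ω ∈ Set.Icc (0 : ℝ) 1)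
    (hindep : iIndepFun X P) (a : ι → ℝ) {ε : ℝ} (hε : 0 ≤ ε) :
    P.real {ω | ε ≤ ∑ i, a i * (P[X i] - X i ω)} ≤ exp (-2 * ε ^ 2 / ∑ i, a i ^ 2) := by
  have hsubG : ∀ i ∈ univ, HasSubgaussianMGF (fun ω ↦ a i * (P[X i] - X i ω))
      (‖a i‖₊ ^ 2 / 4) P := fun i _ ↦ by
    convert (hasSubgaussianMGF_of_mem_Icc (hX i) (hX01 i)).const_mul (-a i) using 1
    · ext ω
      ring
    · ext
      -- `const_mul` builds its constant as a bare subtype, which `rw` cannot see as `ℝ≥0`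
      erw [NNReal.coe_mul]
      change _ = (-a i) ^ 2 * _
      norm_num
      ring
  have hindep' : iIndepFun (fun i ω ↦ a i * (P[X i] - X i ω)) P :=
    hindep.comp (fun i y ↦ a i * ((∫ x, X i x ∂P) - y)) fun i ↦
      (measurable_const.sub measurable_id).const_mul _
  refine (HasSubgaussianMGF.measure_sum_ge_le_of_iIndepFun hindep' hsubG hε).trans_eq ?_
  push_cast
  simp only [Real.norm_eq_abs, sq_abs, ← Finset.sum_div]
  ring_nf

theorem measureReal_sum_mul_centered_gt_sqrt_le [Fintype ι] {X : ι → Ω → ℝ}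
    (hX : ∀ i, AEMeasurable (X i) P)
    (hX01 : ∀ i, ∀ᵐ ω ∂P, X i ω ∈ Set.Icc (0 : ℝ) 1)
    (hindep : iIndepFun X P) (a : ι → ℝ) {t : ℝ} (ht : 0 ≤ t) :
    P.real {ω | √(t / 2 * ∑ i, a i ^ 2) < ∑ i, a i * (P[X i] - X i ω)} ≤ exp (-t) := by
  rcases (sum_nonneg fun i _ ↦ sq_nonneg (a i) : 0 ≤ ∑ i, a i ^ 2).eq_or_lt with h0 | hpos
  · have ha : ∀ i, a i = 0 := fun i ↦ by
      simpa using
        congr_fun ((Fintype.sum_eq_zero_iff_of_nonneg fun i ↦ sq_nonneg (a i)).1 h0.symm) i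
    simp [ha, exp_nonneg]
  calc P.real {ω | √(t / 2 * ∑ i, a i ^ 2) < ∑ i, a i * (P[X i] - X i ω)}
      ≤ P.real {ω | √(t / 2 * ∑ i, a i ^ 2) ≤ ∑ i, a i * (P[X i] - X i ω)} :=
        measureReal_mono (Set.ofPred_subset_ofPred.2 fun _ ↦ le_of_lt)
    _ ≤ exp (-2 * √(t / 2 * ∑ i, a i ^ 2) ^ 2 / ∑ i, a i ^ 2) :=
        measureReal_sum_mul_centered_ge_le hX hX01 hindep a (sqrt_nonneg _)
    _ = exp (-t) := by
        rw [sq_sqrt (by positivity)]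
        field_simp

lemma ofReal_one_sub_le_measure_setOf_forall {H : Type*} [Fintype H] {q : H → Ω → Prop}
    {η : ℝ} (hη : 0 ≤ η) (hq : ∀ h, P.real {ω | q h ω}ᶜ ≤ η / Fintype.card H) :
    ENNReal.ofReal (1 - η) ≤ P {ω | ∀ h, q h ω} := by
  have hcompl : P.real {ω | ∀ h, q h ω}ᶜ ≤ η := by
    calc P.real {ω | ∀ h, q h ω}ᶜ = P.real (⋃ h, {ω | q h ω}ᶜ) := by
          congr 1
          ext ω
          simp
      _ ≤ ∑ h, P.real {ω | q h ω}ᶜ := measureReal_iUnion_fintype_le _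
      _ ≤ ∑ _h : H, η / Fintype.card H := sum_le_sum fun h _ ↦ hq h
      _ = η * (Fintype.card H / Fintype.card H) := by
          rw [sum_const, card_univ, nsmul_eq_mul, mul_div_left_comm]
      _ ≤ η := mul_le_of_le_one_right hη (div_self_le_one _)
  rw [ENNReal.ofReal_sub _ hη, ENNReal.ofReal_one, tsub_le_iff_right]
  calc 1 = P Set.univ := measure_univ.symm
    _ ≤ P {ω | ∀ h, q h ω} + P {ω | ∀ h, q h ω}ᶜ := measure_univ_le_add_compl _
    _ ≤ P {ω | ∀ h, q h ω} + ENNReal.ofReal η := by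
        gcongr
        exact (ENNReal.le_ofReal_iff_toReal_le (measure_ne_top _ _) hη).2 hcompl

end Hoeffding

section Decomposition

variable {ι : Type*} [Fintype ι] (e ehat o p phat : ι → ℝ)

lemma sum_eq_sum_dr_add_sum_bias_add_sum_noise :
    ∑ i, e i = ∑ i, (ehat i + o i / phat i * (e i - ehat i))
      + ∑ i, (1 - p i / phat i) * (e i - ehat i)
      + ∑ i, (e i - ehat i) / phat i * (p i - o i) := by
  simp only [← sum_add_distrib]
  exact sum_congr rfl fun i _ ↦ by ring

lemma mean_le_dr_add_of_noise_le {N K : ℝ} (hN : 0 ≤ N)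
    (hnoise : ∑ i, (e i - ehat i) / phat i * (p i - o i)
      ≤ √(K / 2 * ∑ i, ((e i - ehat i) / phat i) ^ 2)) :
    1 / N * ∑ i, e i
      ≤ 1 / N * ∑ i, (ehat i + o i / phat i * (e i - ehat i))
        + 1 / N * ∑ i, |(1 - p i / phat i) * (e i - ehat i)|
        + √(K / (2 * N ^ 2) * ∑ i, ((e i - ehat i) / phat i) ^ 2) := by
  have hsqrt : √(K / (2 * N ^ 2) * ∑ i, ((e i - ehat i) / phat i) ^ 2)
      = 1 / N * √(K / 2 * ∑ i, ((e i - ehat i) / phat i) ^ 2) := by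
    rw [show K / (2 * N ^ 2) * ∑ i, ((e i - ehat i) / phat i) ^ 2
        = K / 2 * (∑ i, ((e i - ehat i) / phat i) ^ 2) / N ^ 2 by ring,
      sqrt_div' _ (sq_nonneg N), sqrt_sq hN]
    ring
  have hbias : ∑ i, (1 - p i / phat i) * (e i - ehat i)
      ≤ ∑ i, |(1 - p i / phat i) * (e i - ehat i)| :=
    sum_le_sum fun i _ ↦ le_abs_self _
  rw [sum_eq_sum_dr_add_sum_bias_add_sum_noise e ehat o p phat, hsqrt]
  linear_combination mul_le_mul_of_nonneg_left (add_le_add hbias hnoise) (one_div_nonneg.2 hN)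

end Decomposition

theorem dr_estimator_generalization_bound_general
    {Ω : Type*} [MeasurableSpace Ω] (P : Measure Ω) [IsProbabilityMeasure P]
    {ι : Type*} [Fintype ι] (N : ℕ)
    {H : Type*} [Fintype H]
    (e ehat : H → ι → ℝ) (p phat : ι → ℝ)
    (o : ι → Ω → ℝ) (ho_meas : ∀ i, Measurable (o i))
    (ho01 : ∀ i ω, o i ω = 0 ∨ o i ω = 1)
    (hindep : iIndepFun o P)
    (hprob : ∀ i, (P {ω | o i ω = 1}).toReal = p i)
    (η : ℝ) (hη : η ∈ Set.Ioo (0 : ℝ) 1) :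
    ENNReal.ofReal (1 - η) ≤
      P {ω | ∀ h : H,
        (1 / (N : ℝ)) * ∑ i, e h i
          ≤ (1 / (N : ℝ)) * ∑ i, (ehat h i + o i ω / phat i * (e h i - ehat h i))
            + (1 / (N : ℝ)) * ∑ i, |(1 - p i / phat i) * (e h i - ehat h i)|
            + Real.sqrt
                (Real.log (2 * (Fintype.card H : ℝ) / η) / (2 * (N : ℝ) ^ 2)
                  * ∑ i, ((e h i - ehat h i) / phat i) ^ 2)} := by
  obtain ⟨hη0, hη1⟩ := hη
  have hmean : ∀ i, P[o i] = p i := fun i ↦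
    (integral_eq_measureReal_of_eq_zero_or_eq_one (ho_meas i) (ho01 i)).trans (hprob i)
  have ho_Icc : ∀ i, ∀ᵐ ω ∂P, o i ω ∈ Set.Icc (0 : ℝ) 1 := fun i ↦
    ae_of_all _ fun ω ↦ by rcases ho01 i ω with h | h <;> simp [h]
  refine ofReal_one_sub_le_measure_setOf_forall hη0.le fun h ↦ ?_
  have hH : (1 : ℝ) ≤ Fintype.card H := Nat.one_le_cast.2 (Fintype.card_pos_iff.2 ⟨h⟩)
  set K := log (2 * (Fintype.card H : ℝ) / η)
  have hK : 0 ≤ K := log_nonneg (by rw [le_div_iff₀ hη0]; linarith)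
  have htail := measureReal_sum_mul_centered_gt_sqrt_le (fun i ↦ (ho_meas i).aemeasurable)
    ho_Icc hindep (fun i ↦ (e h i - ehat h i) / phat i) hK
  simp only [hmean] at htail
  refine (measureReal_mono fun ω hω ↦ ?_).trans (htail.trans ?_)
  · exact not_le.1 fun hle ↦ hω (mean_le_dr_add_of_noise_le _ _ _ _ _ N.cast_nonneg hle)
  · rw [exp_neg, exp_log (div_pos (by positivity) hη0), inv_div]
    gcongr
    linarith

/-- **Generalization bound of the DR estimator.** Under the DR estimator
setup with the hypothesis-class extension, writing `Δ_i = 1 − p_i/p̂_i` and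
`δ_i(h) = e_i(h) − ê_i(h)`, for every `η ∈ (0,1)`, with probability at least `1 − η`,
simultaneously for every `h ∈ 𝓗`:
`R_true(h) ≤ R̂_DR(h) + (1/N) Σ_i |Δ_i δ_i(h)|
  + sqrt( ln(2|𝓗|/η) / (2N²) · Σ_i (δ_i(h)/p̂_i)² )`. -/
theorem dr_estimator_generalization_bound
    {Ω : Type*} [MeasurableSpace Ω] (P : Measure Ω) [IsProbabilityMeasure P]
    {ι : Type*} [Fintype ι] (N : ℕ) (hN : 1 ≤ N) (hcard : Fintype.card ι = N)
    {H : Type*} [Fintype H] [Nonempty H]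
    (e ehat : H → ι → ℝ) (p phat : ι → ℝ)
    (hp : ∀ i, p i ∈ Set.Icc (0 : ℝ) 1)
    (hphat : ∀ i, phat i ∈ Set.Ioc (0 : ℝ) 1)
    (o : ι → Ω → ℝ) (ho_meas : ∀ i, Measurable (o i))
    (ho01 : ∀ i ω, o i ω = 0 ∨ o i ω = 1)
    (hindep : iIndepFun o P)
    (hprob : ∀ i, (P {ω | o i ω = 1}).toReal = p i)
    (η : ℝ) (hη : η ∈ Set.Ioo (0 : ℝ) 1) :
    ENNReal.ofReal (1 - η) ≤
      P {ω | ∀ h : H,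
        (1 / (N : ℝ)) * ∑ i, e h i
          ≤ (1 / (N : ℝ)) * ∑ i, (ehat h i + o i ω / phat i * (e h i - ehat h i))
            + (1 / (N : ℝ)) * ∑ i, |(1 - p i / phat i) * (e h i - ehat h i)|
            + Real.sqrt
                (Real.log (2 * (Fintype.card H : ℝ) / η) / (2 * (N : ℝ) ^ 2)
                  * ∑ i, ((e h i - ehat h i) / phat i) ^ 2)} :=
  dr_estimator_generalization_bound_general P N e ehat p phat o ho_meas ho01 hindep hprob η hη
end

section
/- (Path length bound / covering number of a smooth trajectory.) Let h_0, h_1, …, h_T be points of ℝ^d (Euclidean norm), T ≥ 1, and let L_smooth = Σ_{t=1}^{T} ‖h_t − h_{t−1}‖². Then for every δ > 0 the δ-covering number of the trajectory satisfies N(δ) ≤ sqrt( T · L_smooth ) / δ + 1. -/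
/-!
Let `ℓ(t) = Σ_{i<t} ‖h_{i+1} − h_i‖` be the path length up to time `t`. Times whose lengths fall
in the same slot `[kδ, (k+1)δ)` have points within `δ` of each other, since the distance between
two points of the path is at most the length travelled in between; one representative per slot
therefore covers the trajectory, and at most `ℓ(T)/δ + 1` slots are met. Finally
`ℓ(T) ≤ sqrt(T · L_smooth)` by Cauchy–Schwarz.
-/

open Finset

theorem abs_sub_lt_of_natFloor_div_eq {K : Type*} [Field K] [LinearOrder K]
    [IsStrictOrderedRing K] [FloorRing K] {a b δ : K} (ha : 0 ≤ a) (hb : 0 ≤ b) (hδ : 0 < δ)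
    (h : ⌊a / δ⌋₊ = ⌊b / δ⌋₊) : |a - b| < δ := by
  have hfloor : ⌊a / δ⌋ = ⌊b / δ⌋ := by
    rw [← Int.natCast_floor_eq_floor (by positivity),
      ← Int.natCast_floor_eq_floor (by positivity), h]
  have := Int.abs_sub_lt_one_of_floor_eq_floor hfloor
  rwa [← sub_div, abs_div, abs_of_pos hδ, div_lt_one hδ] at this

section PathLength

variable {α : Type*} [PseudoMetricSpace α] (f : ℕ → α)

def pathLength (t : ℕ) : ℝ := ∑ i ∈ range t, dist (f i) (f (i + 1))

theorem pathLength_nonneg (t : ℕ) : 0 ≤ pathLength f t :=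
  sum_nonneg fun _ _ => dist_nonneg

theorem pathLength_mono : Monotone (pathLength f) := fun _ _ hab =>
  sum_le_sum_of_subset_of_nonneg (range_subset_range.2 hab) fun _ _ _ => dist_nonneg

theorem dist_le_pathLength_sub {u t : ℕ} (hut : u ≤ t) :
    dist (f u) (f t) ≤ pathLength f t - pathLength f u := by
  rw [pathLength, pathLength, ← sum_Ico_eq_sub _ hut]
  exact dist_le_Ico_sum_dist f hut

theorem dist_le_abs_pathLength_sub (u t : ℕ) :
    dist (f u) (f t) ≤ |pathLength f t - pathLength f u| := by
  rcases le_total u t with hut | htu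
  · exact (dist_le_pathLength_sub f hut).trans (le_abs_self _)
  · rw [dist_comm, abs_sub_comm]
    exact (dist_le_pathLength_sub f htu).trans (le_abs_self _)

theorem exists_finset_card_le_pathLength_div_add_one (T : ℕ) {δ : ℝ} (hδ : 0 < δ) :
    ∃ S : Finset α, (S.card : ℝ) ≤ pathLength f T / δ + 1 ∧
      ∀ t ≤ T, ∃ s ∈ S, dist (f t) s < δ := by
  classical
  set slot : ℕ → ℕ := fun t => ⌊pathLength f t / δ⌋₊
  set slots := (range (T + 1)).image slot
  set rep : ℕ → ℕ := Function.invFunOn slot (range (T + 1))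
  refine ⟨slots.image (f ∘ rep), ?_, fun t ht => ⟨f (rep (slot t)), ?_, ?_⟩⟩
  · have hslots : slots ⊆ range (slot T + 1) := by
      simp only [slots, subset_iff, mem_image, mem_range, forall_exists_index, and_imp]
      rintro _ t ht rfl
      exact Nat.lt_succ_of_le <| Nat.floor_le_floor <|
        div_le_div_of_nonneg_right (pathLength_mono f (Nat.le_of_lt_succ ht)) hδ.le
    calc ((slots.image (f ∘ rep)).card : ℝ) ≤ slot T + 1 := by
          exact_mod_cast card_image_le.trans ((card_le_card hslots).trans (card_range _).le)
      _ ≤ pathLength f T / δ + 1 := by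
          gcongr; exact Nat.floor_le (div_nonneg (pathLength_nonneg f T) hδ.le)
  · exact mem_image_of_mem _ (mem_image_of_mem _ (mem_range.2 (Nat.lt_succ_of_le ht)))
  · have hmem : ∃ u ∈ (range (T + 1) : Set ℕ), slot u = slot t :=
      ⟨t, by simpa using Nat.lt_succ_of_le ht, rfl⟩
    rw [dist_comm]
    exact (dist_le_abs_pathLength_sub f _ t).trans_lt <|
      abs_sub_lt_of_natFloor_div_eq (pathLength_nonneg f t) (pathLength_nonneg f _) hδ
        (Function.invFunOn_eq hmem).symm

theorem pathLength_sq_le (T : ℕ) :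
    pathLength f T ^ 2 ≤ T * ∑ i ∈ range T, dist (f i) (f (i + 1)) ^ 2 := by
  simpa [pathLength] using
    sq_sum_le_card_mul_sum_sq (s := range T) (f := fun i => dist (f i) (f (i + 1)))

end PathLength

theorem trajectory_covering_by_smoothness_general
    {d : ℕ} (T : ℕ) (h : ℕ → EuclideanSpace ℝ (Fin d))
    (δ : ℝ) (hδ : 0 < δ) :
    ∃ S : Finset (EuclideanSpace ℝ (Fin d)),
      (S.card : ℝ)
          ≤ Real.sqrt ((T : ℝ) * ∑ t ∈ Finset.range T, ‖h (t + 1) - h t‖ ^ 2) / δ + 1 ∧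
      ∀ t ≤ T, ∃ s ∈ S, ‖h t - s‖ ≤ δ := by
  have hdist : ∀ i, dist (h i) (h (i + 1)) = ‖h (i + 1) - h i‖ := fun i => dist_eq_norm' _ _
  obtain ⟨S, hcard, hcover⟩ := exists_finset_card_le_pathLength_div_add_one h T hδ
  have hlength : pathLength h T ≤ Real.sqrt (T * ∑ t ∈ range T, ‖h (t + 1) - h t‖ ^ 2) := by
    simp_rw [← hdist]
    exact Real.le_sqrt_of_sq_le (pathLength_sq_le h T)
  refine ⟨S, hcard.trans (by gcongr), fun t ht => ?_⟩
  obtain ⟨s, hs, hts⟩ := hcover t ht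
  exact ⟨s, hs, (dist_eq_norm _ _).symm.trans_le hts.le⟩

/-- **Covering number of a smooth trajectory.** Let `h_0, …, h_T` be
points of `ℝ^d`, `T ≥ 1`, and `L_smooth = Σ_{t=1}^T ‖h_t − h_{t−1}‖²`. Then for every
`δ > 0` the `δ`-covering number of the trajectory satisfies
`N(δ) ≤ sqrt(T · L_smooth)/δ + 1`, witnessed by a finite set of points covering the
trajectory within distance `δ`. -/
theorem trajectory_covering_by_smoothness
    {d : ℕ} (T : ℕ) (hT : 1 ≤ T) (h : ℕ → EuclideanSpace ℝ (Fin d))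
    (δ : ℝ) (hδ : 0 < δ) :
    ∃ S : Finset (EuclideanSpace ℝ (Fin d)),
      (S.card : ℝ)
          ≤ Real.sqrt ((T : ℝ) * ∑ t ∈ Finset.range T, ‖h (t + 1) - h t‖ ^ 2) / δ + 1 ∧
      ∀ t ≤ T, ∃ s ∈ S, ‖h t - s‖ ≤ δ :=
  trajectory_covering_by_smoothness_general T h δ hδ
end

section
/- (Dudley entropy integral bound for empirical Rademacher complexity.) In the empirical Rademacher complexity setup, assume G is countable, the covering number N(ε) is finite for every ε > 0, and D ∈ (0,∞) satisfies d_T(g, 0) ≤ D for every g ∈ G (0 denoting the zero function). Then R̂_T(G) ≤ (12/√T) · ∫_{0}^{D} sqrt( log N(ε) ) dε. -/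
/-!
Chaining. Let `π_j g` be a point within `D 2^{-j}` of `g` in a minimal `D 2^{-j}`-net of `G`,
with `π_0 g = 0`, and write `g = Σ_{j<n} (π_{j+1} g - π_j g) + (g - π_n g)`. The remainder
contributes at most `D 2^{-n}` to the Rademacher process by Cauchy–Schwarz. The links at level `j`
range over at most `N(D 2^{-j-1})²` functions of empirical norm at most `3 D 2^{-j-1}`, so
Massart's finite class lemma (Hoeffding's bound `cosh x ≤ exp (x² / 2)`, Jensen, and a union
bound) controls their expected supremum by `6 D 2^{-j-1} √(log N(D 2^{-j-1}) / T)`. As `N` is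
antitone, the sum of these bounds is a lower Riemann sum of `(12 / √T) ∫₀^D √(log N(ε)) dε`;
let `n → ∞`.
-/

open MeasureTheory

/-- The empirical metric `d_T(g,g′) = sqrt( (1/T) Σ_t (g(h_t) − g′(h_t))² )`. -/
noncomputable def empDist {Z : Type*} (T : ℕ) (h : Fin T → Z) (g g' : Z → ℝ) : ℝ :=
  Real.sqrt ((1 / (T : ℝ)) * ∑ t, (g (h t) - g' (h t)) ^ 2)

/-- The empirical Rademacher complexity
`R̂_T(G) = E_σ[ sup_{g∈G} (1/T) Σ_t σ_t g(h_t) ]`, the expectation over independent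
uniform random signs `σ_t ∈ {−1,+1}` written as an average over all sign vectors. -/
noncomputable def empRademacher {Z : Type*} (T : ℕ) (h : Fin T → Z)
    (G : Set (Z → ℝ)) : ℝ :=
  ((2 : ℝ) ^ T)⁻¹ * ∑ σ : Fin T → Bool,
    ⨆ g : G, (1 / (T : ℝ)) * ∑ t, (if σ t then (1 : ℝ) else -1) * (g : Z → ℝ) (h t)

/-- The `ε`-covering number `N(ε, G, d_T)`: minimal cardinality of a finite `V ⊆ G` such
that every `g ∈ G` is within empirical distance `ε` of some `v ∈ V` (`⊤` if none). -/
noncomputable def coveringNumber {Z : Type*} (T : ℕ) (h : Fin T → Z)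
    (G : Set (Z → ℝ)) (ε : ℝ) : ℕ∞ :=
  sInf {n : ℕ∞ | ∃ V : Finset (Z → ℝ), ↑V ⊆ G ∧ (V.card : ℕ∞) = n ∧
    ∀ g ∈ G, ∃ v ∈ V, empDist T h g v ≤ ε}

open Finset Real
open scoped BigOperators

lemma Real.log_natCast_monotone : Monotone fun n : ℕ => log n := fun m n hmn => by
  rcases m.eq_zero_or_pos with rfl | hm
  · simpa using log_natCast_nonneg n
  · exact log_le_log (by exact_mod_cast hm) (by exact_mod_cast hmn)

lemma exp_expect_le_expect_exp {α : Type*} {s : Finset α} (hs : s.Nonempty) (f : α → ℝ) :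
    exp (𝔼 i ∈ s, f i) ≤ 𝔼 i ∈ s, exp (f i) := by
  have hw : ∑ _i ∈ s, ((#s : ℝ))⁻¹ = 1 := by
    rw [sum_const, nsmul_eq_mul, mul_inv_cancel₀ (by exact_mod_cast hs.card_pos.ne')]
  simpa [expect_eq_sum_div_card, div_eq_inv_mul, mul_sum] using
    convexOn_exp.map_sum_le (fun _ _ => by positivity) hw (fun i _ => Set.mem_univ (f i))

lemma exp_mul_sup'_le_sum {κ : Type*} (S : Finset κ) (hS : S.Nonempty) (f : κ → ℝ) (l : ℝ) :
    exp (l * S.sup' hS f) ≤ ∑ i ∈ S, exp (l * f i) := by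
  obtain ⟨i, hi, hmax⟩ := S.exists_mem_eq_sup' hS f
  rw [hmax]
  exact single_le_sum (f := fun i => exp (l * f i)) (fun _ _ => (exp_pos _).le) hi

lemma le_sqrt_of_forall_le_div_add {A c L : ℝ} (hc : 0 ≤ c) (hL : 0 ≤ L)
    (h : ∀ l > 0, A ≤ L / l + l * c / 2) : A ≤ √(2 * c * L) := by
  refine le_of_forall_pos_le_add fun ε hε => ?_
  rcases hc.eq_or_lt with rfl | hc
  · -- as `l → ∞` the bound `L / l` tends to `0`
    calc A ≤ L / ((L + 1) / ε) + (L + 1) / ε * 0 / 2 := h _ (by positivity)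
      _ ≤ √(2 * 0 * L) + ε := by
          simp only [mul_zero, zero_mul, zero_div, add_zero, sqrt_zero, zero_add]
          rw [div_div_eq_mul_div, div_le_iff₀ (by positivity)]
          nlinarith
  · -- `l = s / c` turns the bound into `L c / s + s / 2`, which is at most `s`
    set s := √(2 * c * L) + ε
    have hs : 0 < s := by positivity
    have hs2 : 2 * c * L ≤ s ^ 2 := by
      nlinarith [sq_sqrt (by positivity : 0 ≤ 2 * c * L), sqrt_nonneg (2 * c * L)]
    calc A ≤ L / (s / c) + s / c * c / 2 := h _ (by positivity)
      _ ≤ s := by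
          rw [div_div_eq_mul_div, div_mul_cancel₀ _ hc.ne', div_add' _ _ _ hs.ne', div_le_iff₀ hs]
          nlinarith

section RademacherSum

variable {ι κ : Type*} [Fintype ι]

noncomputable def rademacherSum (σ : ι → Bool) (a : ι → ℝ) : ℝ :=
  ∑ t, (if σ t then 1 else -1) * a t

lemma rademacherSum_mul (σ : ι → Bool) (l : ℝ) (a : ι → ℝ) :
    rademacherSum σ (fun t => l * a t) = l * rademacherSum σ a := by
  simp only [rademacherSum, mul_sum]
  exact sum_congr rfl fun _ _ => by ring

lemma rademacherSum_le (σ : ι → Bool) (a : ι → ℝ) :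
    rademacherSum σ a ≤ √(Fintype.card ι) * √(∑ t, a t ^ 2) := by
  have hsq : ∑ t, (if σ t then (1 : ℝ) else -1) ^ 2 = Fintype.card ι := by
    simp [apply_ite (· ^ 2)]
  rw [rademacherSum, ← hsq]
  exact sum_mul_le_sqrt_mul_sqrt univ _ a

lemma sum_bool_exp_sign_mul (x : ℝ) :
    ∑ b : Bool, exp ((if b then 1 else -1) * x) = 2 * cosh x := by
  rw [Fintype.sum_bool, cosh_eq]
  simp only [if_true, Bool.false_eq_true, if_false, one_mul, neg_one_mul]
  ring

variable [DecidableEq ι]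

lemma expect_exp_rademacherSum_le (a : ι → ℝ) :
    𝔼 σ : ι → Bool, exp (rademacherSum σ a) ≤ exp ((∑ t, a t ^ 2) / 2) := by
  have hprod : ∑ σ : ι → Bool, exp (rademacherSum σ a) = ∏ t, 2 * cosh (a t) := by
    simp only [rademacherSum, exp_sum, ← sum_bool_exp_sign_mul]
    exact (Fintype.prod_sum fun t (b : Bool) => exp ((if b then 1 else -1) * a t)).symm
  have hcosh : ∏ t, 2 * cosh (a t) ≤ 2 ^ Fintype.card ι * exp ((∑ t, a t ^ 2) / 2) := by
    calc ∏ t, 2 * cosh (a t) ≤ ∏ t, 2 * exp (a t ^ 2 / 2) :=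
          prod_le_prod (fun t _ => by positivity)
            fun t _ => mul_le_mul_of_nonneg_left (cosh_le_exp_half_sq _) zero_le_two
      _ = 2 ^ Fintype.card ι * exp ((∑ t, a t ^ 2) / 2) := by
          rw [prod_mul_distrib, prod_const, card_univ, sum_div, exp_sum]
  rw [Fintype.expect_eq_sum_div_card, hprod, Fintype.card_fun, Fintype.card_bool,
    div_le_iff₀ (by positivity), mul_comm]
  push_cast
  exact hcosh

lemma expect_sup'_rademacherSum_le_of_pos (S : Finset κ) (hS : S.Nonempty) (F : κ → ι → ℝ)
    {c : ℝ} (hc : ∀ i ∈ S, ∑ t, F i t ^ 2 ≤ c) {l : ℝ} (hl : 0 < l) :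
    𝔼 σ : ι → Bool, S.sup' hS (fun i => rademacherSum σ (F i)) ≤ log #S / l + l * c / 2 := by
  set A := 𝔼 σ : ι → Bool, S.sup' hS (fun i => rademacherSum σ (F i))
  have hmgf : exp (l * A) ≤ #S * exp (l ^ 2 * c / 2) := calc
    exp (l * A) ≤ 𝔼 σ : ι → Bool, exp (l * S.sup' hS (fun i => rademacherSum σ (F i))) := by
        rw [mul_expect]; exact exp_expect_le_expect_exp univ_nonempty _
    _ ≤ 𝔼 σ : ι → Bool, ∑ i ∈ S, exp (rademacherSum σ (fun t => l * F i t)) := by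
        refine expect_le_expect fun σ _ => ?_
        simp only [rademacherSum_mul]
        exact exp_mul_sup'_le_sum S hS _ l
    _ = ∑ i ∈ S, 𝔼 σ : ι → Bool, exp (rademacherSum σ (fun t => l * F i t)) :=
        expect_sum_comm _ _ _
    _ ≤ ∑ _i ∈ S, exp (l ^ 2 * c / 2) := by
        refine sum_le_sum fun i hi => (expect_exp_rademacherSum_le _).trans ?_
        have : ∑ t, (l * F i t) ^ 2 = l ^ 2 * ∑ t, F i t ^ 2 := by
          rw [mul_sum]; exact sum_congr rfl fun _ _ => by ring
        rw [this]
        gcongr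
        exact hc i hi
    _ = #S * exp (l ^ 2 * c / 2) := by rw [sum_const, nsmul_eq_mul]
  have hcard : (0 : ℝ) < #S := by exact_mod_cast hS.card_pos
  have hlog : l * A ≤ log #S + l ^ 2 * c / 2 := by
    rwa [← exp_le_exp, exp_add, exp_log hcard]
  rw [div_add' _ _ _ hl.ne', le_div_iff₀ hl]
  nlinarith

/-- **Massart's finite class lemma.** -/
theorem expect_sup'_rademacherSum_le (S : Finset κ) (hS : S.Nonempty) (F : κ → ι → ℝ)
    {c : ℝ} (hc0 : 0 ≤ c) (hc : ∀ i ∈ S, ∑ t, F i t ^ 2 ≤ c) :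
    𝔼 σ : ι → Bool, S.sup' hS (fun i => rademacherSum σ (F i)) ≤ √(2 * c * log #S) :=
  le_sqrt_of_forall_le_div_add hc0 (log_natCast_nonneg _) fun _ hl =>
    expect_sup'_rademacherSum_le_of_pos S hS F hc hl

end RademacherSum

section Empirical

variable {Z : Type*} {T : ℕ} {h : Fin T → Z} {G : Set (Z → ℝ)}

noncomputable def rademacherProcess (T : ℕ) (h : Fin T → Z) (σ : Fin T → Bool) (g : Z → ℝ) : ℝ :=
  (1 / (T : ℝ)) * rademacherSum σ (fun t => g (h t))

lemma empRademacher_eq_expect :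
    empRademacher T h G = 𝔼 σ, ⨆ g : G, rademacherProcess T h σ g := by
  rw [Fintype.expect_eq_sum_div_card, Fintype.card_fun, Fintype.card_bool, Fintype.card_fin,
    div_eq_inv_mul]
  push_cast
  rfl

lemma rademacherProcess_zero (σ : Fin T → Bool) : rademacherProcess T h σ 0 = 0 := by
  simp [rademacherProcess, rademacherSum]

lemma rademacherProcess_sub (σ : Fin T → Bool) (g g' : Z → ℝ) :
    rademacherProcess T h σ (g - g') = rademacherProcess T h σ g - rademacherProcess T h σ g' := by
  simp only [rademacherProcess, rademacherSum, Pi.sub_apply, mul_sub, sum_sub_distrib]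

lemma rademacherProcess_eq_rademacherSum (σ : Fin T → Bool) (g : Z → ℝ) :
    rademacherProcess T h σ g = rademacherSum σ (fun t => g (h t) / T) := by
  simp only [rademacherProcess, rademacherSum, mul_sum]
  exact sum_congr rfl fun _ _ => by ring

lemma rademacherProcess_sub_le_empDist (σ : Fin T → Bool) (g g' : Z → ℝ) :
    rademacherProcess T h σ (g - g') ≤ empDist T h g g' := by
  have hT : (1 / (T : ℝ)) * √T = √(1 / T) := by
    rw [one_div_mul_eq_div, sqrt_div_self, one_div, sqrt_inv]
  calc rademacherProcess T h σ (g - g')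
      ≤ 1 / T * (√(Fintype.card (Fin T)) * √(∑ t, (g (h t) - g' (h t)) ^ 2)) :=
        mul_le_mul_of_nonneg_left (rademacherSum_le σ _) (by positivity)
    _ = empDist T h g g' := by
        rw [Fintype.card_fin, ← mul_assoc, hT, empDist, sqrt_mul (by positivity)]

lemma empDist_eq_dist (g g' : Z → ℝ) :
    empDist T h g g' = √(1 / T) * dist (WithLp.toLp 2 (fun t => g (h t)) : EuclideanSpace ℝ (Fin T))
      (WithLp.toLp 2 fun t => g' (h t)) := by
  rw [EuclideanSpace.dist_eq, empDist, sqrt_mul (by positivity)]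
  simp only [Real.dist_eq, sq_abs]

lemma empDist_comm (g g' : Z → ℝ) : empDist T h g g' = empDist T h g' g := by
  rw [empDist_eq_dist, empDist_eq_dist, dist_comm]

lemma empDist_triangle (g₁ g₂ g₃ : Z → ℝ) :
    empDist T h g₁ g₃ ≤ empDist T h g₁ g₂ + empDist T h g₂ g₃ := by
  simp only [empDist_eq_dist, ← mul_add]
  exact mul_le_mul_of_nonneg_left (dist_triangle _ _ _) (sqrt_nonneg _)

lemma empDist_sub_zero (g g' : Z → ℝ) : empDist T h (g - g') 0 = empDist T h g g' := by
  simp [empDist]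

lemma coveringNumber_antitone : Antitone (coveringNumber T h G) := by
  intro ε ε' hε
  refine sInf_le_sInf fun n ⟨V, hVG, hVn, hV⟩ => ⟨V, hVG, hVn, fun g hg => ?_⟩
  obtain ⟨v, hv, hgv⟩ := hV g hg
  exact ⟨v, hv, hgv.trans hε⟩

lemma exists_cover_card_eq_coveringNumber {ε : ℝ} (hε : coveringNumber T h G ε ≠ ⊤) :
    ∃ V : Finset (Z → ℝ), ↑V ⊆ G ∧ (#V : ℕ∞) = coveringNumber T h G ε ∧
      ∀ g ∈ G, ∃ v ∈ V, empDist T h g v ≤ ε := by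
  obtain ⟨n, hn, -⟩ := not_forall₂.mp (sInf_eq_top.not.mp hε)
  exact csInf_mem ⟨n, hn⟩

lemma rademacherProcess_le_sum_add_empDist (σ : Fin T → Bool) {p : ℕ → Z → ℝ} (hp0 : p 0 = 0)
    (g : Z → ℝ) (n : ℕ) :
    rademacherProcess T h σ g ≤
      ∑ i ∈ range n, rademacherProcess T h σ (p (i + 1) - p i) + empDist T h g (p n) := by
  have htelescope : ∑ i ∈ range n, rademacherProcess T h σ (p (i + 1) - p i) =
      rademacherProcess T h σ (p n) := by
    simp only [rademacherProcess_sub, sum_range_sub (fun i => rademacherProcess T h σ (p i)), hp0,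
      rademacherProcess_zero, sub_zero]
  have hrem := rademacherProcess_sub_le_empDist σ (h := h) g (p n)
  rw [rademacherProcess_sub] at hrem
  linarith

lemma expect_sup'_rademacherProcess_le {W : Finset (Z → ℝ)} (hW : W.Nonempty) {δ : ℝ}
    (hδ : ∀ u ∈ W, empDist T h u 0 ≤ δ) :
    𝔼 σ, W.sup' hW (rademacherProcess T h σ) ≤ δ / √T * √(2 * log #W) := by
  have hδ0 : 0 ≤ δ := (sqrt_nonneg _).trans (hδ _ hW.choose_spec)
  have hnorm : ∀ u ∈ W, ∑ t, (u (h t) / T) ^ 2 ≤ δ ^ 2 / T := fun u hu => by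
    have hu : empDist T h u 0 ^ 2 ≤ δ ^ 2 := pow_le_pow_left₀ (sqrt_nonneg _) (hδ u hu) 2
    rw [empDist, sq_sqrt (by positivity)] at hu
    simp only [Pi.zero_apply, sub_zero] at hu
    calc ∑ t, (u (h t) / T) ^ 2 = 1 / T * (1 / T * ∑ t, u (h t) ^ 2) := by
          rw [← mul_assoc, mul_sum]; exact sum_congr rfl fun _ _ => by ring
      _ ≤ 1 / T * δ ^ 2 := by gcongr
      _ = δ ^ 2 / T := by ring
  calc 𝔼 σ, W.sup' hW (rademacherProcess T h σ)
      = 𝔼 σ, W.sup' hW (fun u => rademacherSum σ (fun t => u (h t) / T)) := by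
        simp only [rademacherProcess_eq_rademacherSum]
    _ ≤ √(2 * (δ ^ 2 / T) * log #W) :=
        expect_sup'_rademacherSum_le W hW _ (by positivity) hnorm
    _ = δ / √T * √(2 * log #W) := by
        rw [show 2 * (δ ^ 2 / T) * log #W = (δ ^ 2 / T) * (2 * log #W) by ring,
          sqrt_mul (by positivity), sqrt_div' _ T.cast_nonneg, sqrt_sq hδ0]

theorem empRademacher_le_chaining (hne : G.Nonempty) (ε : ℕ → ℝ)
    (P : ℕ → Finset (Z → ℝ)) (hP0 : P 0 = {0})
    (hP : ∀ j, ∀ g ∈ G, ∃ v ∈ P j, empDist T h g v ≤ ε j) (n : ℕ) :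
    empRademacher T h G ≤
      ∑ i ∈ range n, (ε (i + 1) + ε i) / √T * √(2 * log (#(P (i + 1)) * #(P i))) + ε n := by
  classical
  choose p hpP hpdist using hP
  have hp0 : ∀ g (hg : g ∈ G), p 0 g hg = 0 := fun g hg => by simpa [hP0] using hpP 0 g hg
  let W : ℕ → Finset (Z → ℝ) := fun i => ((P (i + 1) ×ˢ P i).image fun q => q.1 - q.2).filter
    fun u => empDist T h u 0 ≤ ε (i + 1) + ε i
  have hpW : ∀ g (hg : g ∈ G) i, p (i + 1) g hg - p i g hg ∈ W i := fun g hg i => by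
    refine mem_filter.2 ⟨mem_image.2 ⟨(p (i + 1) g hg, p i g hg),
      mem_product.2 ⟨hpP _ g hg, hpP i g hg⟩, rfl⟩, ?_⟩
    rw [empDist_sub_zero]
    exact (empDist_triangle _ g _).trans
      (add_le_add ((empDist_comm _ _).trans_le (hpdist _ g hg)) (hpdist i g hg))
  have hW : ∀ i, (W i).Nonempty := fun i => ⟨_, hpW _ hne.some_mem i⟩
  have hWcard : ∀ i, #(W i) ≤ #(P (i + 1)) * #(P i) := fun i =>
    (card_filter_le _ _).trans (card_image_le.trans (card_product _ _).le)
  have hsup : ∀ σ, ⨆ g : G, rademacherProcess T h σ g ≤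
      ∑ i ∈ range n, (W i).sup' (hW i) (rademacherProcess T h σ) + ε n := by
    have := hne.to_subtype
    refine fun σ => ciSup_le fun g => ?_
    refine (rademacherProcess_le_sum_add_empDist σ (p := fun j => p j g g.2) (hp0 g g.2) g
      n).trans (add_le_add (sum_le_sum fun i _ => ?_) (hpdist n g g.2))
    exact le_sup' (rademacherProcess T h σ) (hpW g g.2 i)
  have hlevel : ∀ i, 𝔼 σ, (W i).sup' (hW i) (rademacherProcess T h σ) ≤
      (ε (i + 1) + ε i) / √T * √(2 * log (#(P (i + 1)) * #(P i))) := fun i => by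
    have hδ : ∀ u ∈ W i, empDist T h u 0 ≤ ε (i + 1) + ε i := fun u hu => (mem_filter.1 hu).2
    have hδ0 : 0 ≤ ε (i + 1) + ε i := (sqrt_nonneg _).trans (hδ _ (hW i).choose_spec)
    refine (expect_sup'_rademacherProcess_le (hW i) hδ).trans ?_
    gcongr
    exact_mod_cast hWcard i
  calc empRademacher T h G = 𝔼 σ, ⨆ g : G, rademacherProcess T h σ g := empRademacher_eq_expect
    _ ≤ 𝔼 σ, (∑ i ∈ range n, (W i).sup' (hW i) (rademacherProcess T h σ) + ε n) :=
        expect_le_expect fun σ _ => hsup σ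
    _ = ∑ i ∈ range n, 𝔼 σ, (W i).sup' (hW i) (rademacherProcess T h σ) + ε n := by
        rw [expect_add_distrib, expect_sum_comm, Fintype.expect_const]
    _ ≤ _ := by gcongr with i; exact hlevel i

lemma exists_dyadic_nets (hfin : ∀ ε : ℝ, 0 < ε → coveringNumber T h G ε ≠ ⊤) {D : ℝ}
    (hD : 0 < D) (hdiam : ∀ g ∈ G, empDist T h g 0 ≤ D) :
    ∃ P : ℕ → Finset (Z → ℝ), P 0 = {0} ∧
      (∀ j, ∀ g ∈ G, ∃ v ∈ P j, empDist T h g v ≤ D / 2 ^ j) ∧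
      ∀ i, #(P (i + 1)) * #(P i) ≤ (coveringNumber T h G (D / 2 ^ (i + 1))).toNat ^ 2 := by
  set N : ℕ → ℕ := fun j => (coveringNumber T h G (D / 2 ^ j)).toNat
  choose V _ hVcard hV using fun j : ℕ =>
    exists_cover_card_eq_coveringNumber (hfin (D / 2 ^ j) (by positivity))
  have hVcard' : ∀ j, #(V j) = N j := fun j => by simp [N, ← hVcard j]
  have hNanti : ∀ j, N j ≤ N (j + 1) := fun j =>
    ENat.toNat_le_toNat (coveringNumber_antitone <| div_le_div_of_nonneg_left hD.le
      (by positivity) (pow_le_pow_right₀ one_le_two j.le_succ)) (hfin _ (by positivity))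
  refine ⟨fun j => if j = 0 then {0} else V j, rfl, ?_, ?_⟩
  · rintro (_ | j) g hg
    · exact ⟨0, by simp, by simpa using hdiam g hg⟩
    · simpa using hV (j + 1) g hg
  · rintro (_ | i)
    · simpa [hVcard', N] using Nat.le_self_pow two_ne_zero (N 1)
    · simpa [hVcard', sq] using Nat.mul_le_mul_left _ (hNanti (i + 1))

theorem empRademacher_le_dyadic_entropy_sum (hne : G.Nonempty)
    (hfin : ∀ ε : ℝ, 0 < ε → coveringNumber T h G ε ≠ ⊤) {D : ℝ} (hD : 0 < D)
    (hdiam : ∀ g ∈ G, empDist T h g 0 ≤ D) (n : ℕ) :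
    empRademacher T h G ≤ 12 / √T * ∑ i ∈ range n,
      √(log (coveringNumber T h G (D / 2 ^ (i + 1))).toNat) * (D / 2 ^ (i + 1) - D / 2 ^ (i + 2))
        + D / 2 ^ n := by
  obtain ⟨P, hP0, hP, hcard⟩ := exists_dyadic_nets hfin hD hdiam
  refine (empRademacher_le_chaining hne _ P hP0 hP n).trans ?_
  rw [mul_sum]
  refine add_le_add (sum_le_sum fun i _ => ?_) le_rfl
  set L := log (coveringNumber T h G (D / 2 ^ (i + 1))).toNat
  have hlog : 2 * log (#(P (i + 1)) * #(P i)) ≤ 2 ^ 2 * L := by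
    have := Real.log_natCast_monotone (hcard i)
    push_cast [log_pow] at this
    linarith
  calc (D / 2 ^ (i + 1) + D / 2 ^ i) / √T * √(2 * log (#(P (i + 1)) * #(P i)))
      ≤ (D / 2 ^ (i + 1) + D / 2 ^ i) / √T * (2 * √L) := by
        refine mul_le_mul_of_nonneg_left ?_ (by positivity)
        calc √(2 * log (#(P (i + 1)) * #(P i))) ≤ √(2 ^ 2 * L) := sqrt_le_sqrt hlog
          _ = 2 * √L := by rw [sqrt_mul (by positivity), sqrt_sq zero_le_two]
    _ = 12 / √T * (√L * (D / 2 ^ (i + 1) - D / 2 ^ (i + 2))) := by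
        simp only [pow_succ]; ring

end Empirical

lemma ofReal_sum_mul_sub_le_setLIntegral {φ : ℝ → ℝ} (hφ : AntitoneOn φ (Set.Ioi 0))
    {ε : ℕ → ℝ} (hε : Antitone ε) (hε0 : ∀ j, 0 < ε j) (n : ℕ) :
    ENNReal.ofReal (∑ i ∈ range n, φ (ε i) * (ε i - ε (i + 1))) ≤
      ∫⁻ x in Set.Ioc (ε n) (ε 0), ENNReal.ofReal (φ x) := by
  induction n with
  | zero => simp
  | succ n ih =>
    have hstep : ENNReal.ofReal (φ (ε n) * (ε n - ε (n + 1))) ≤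
        ∫⁻ x in Set.Ioc (ε (n + 1)) (ε n), ENNReal.ofReal (φ x) := by
      rw [ENNReal.ofReal_mul' (sub_nonneg.2 (hε n.le_succ)), ← Real.volume_Ioc,
        ← setLIntegral_const]
      exact setLIntegral_mono' measurableSet_Ioc fun x hx =>
        ENNReal.ofReal_le_ofReal (hφ ((hε0 _).trans hx.1) (hε0 n) hx.2)
    rw [sum_range_succ, ← Set.Ioc_union_Ioc_eq_Ioc (hε n.le_succ) (hε n.zero_le),
      lintegral_union measurableSet_Ioc (Set.Ioc_disjoint_Ioc_of_le le_rfl), add_comm]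
    exact ENNReal.ofReal_add_le.trans (add_le_add hstep ih)

open Filter Topology in
theorem dudley_entropy_integral_bound_general
    {Z : Type*} (T : ℕ) (h : Fin T → Z) (G : Set (Z → ℝ))
    (hne : G.Nonempty)
    (hfin : ∀ ε : ℝ, 0 < ε → coveringNumber T h G ε ≠ ⊤)
    (D : ℝ) (hD : 0 < D)
    (hdiam : ∀ g ∈ G, empDist T h g 0 ≤ D) :
    ENNReal.ofReal (empRademacher T h G)
      ≤ ENNReal.ofReal (12 / Real.sqrt (T : ℝ)) *
          ∫⁻ ε in Set.Ioc (0 : ℝ) D,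
            ENNReal.ofReal (Real.sqrt (Real.log ((coveringNumber T h G ε).toNat : ℝ))) := by
  set φ : ℝ → ℝ := fun ε => √(log (coveringNumber T h G ε).toNat)
  set I := ∫⁻ ε in Set.Ioc (0 : ℝ) D, ENNReal.ofReal (φ ε)
  have hφ : AntitoneOn φ (Set.Ioi 0) := fun a ha _ _ hab => sqrt_le_sqrt <|
    Real.log_natCast_monotone <| ENat.toNat_le_toNat (coveringNumber_antitone hab) (hfin a ha)
  have hdyadic : Antitone fun j : ℕ => D / 2 ^ j := fun i j hij =>
    div_le_div_of_nonneg_left hD.le (by positivity) (pow_le_pow_right₀ one_le_two hij)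
  set S : ℕ → ℝ := fun n => ∑ i ∈ range n,
    φ (D / 2 ^ (i + 1)) * (D / 2 ^ (i + 1) - D / 2 ^ (i + 2))
  have hsum : ∀ n, ENNReal.ofReal (S n) ≤ I := fun n =>
    (ofReal_sum_mul_sub_le_setLIntegral hφ (hdyadic.comp_monotone fun _ _ => Nat.succ_le_succ)
      (fun _ => div_pos hD (by positivity)) n).trans <| lintegral_mono_set <|
        Set.Ioc_subset_Ioc (div_pos hD (by positivity)).le (div_le_self hD.le (by norm_num))
  have hbound : ∀ n, ENNReal.ofReal (empRademacher T h G) ≤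
      ENNReal.ofReal (12 / √T) * I + ENNReal.ofReal (D / 2 ^ n) := fun n => calc
    _ ≤ ENNReal.ofReal (12 / √T * S n + D / 2 ^ n) :=
        ENNReal.ofReal_le_ofReal (empRademacher_le_dyadic_entropy_sum hne hfin hD hdiam n)
    _ ≤ ENNReal.ofReal (12 / √T) * ENNReal.ofReal (S n) + ENNReal.ofReal (D / 2 ^ n) := by
        rw [← ENNReal.ofReal_mul (by positivity)]
        exact ENNReal.ofReal_add_le
    _ ≤ _ := by grw [hsum n]
  have hlim : Tendsto (fun n : ℕ => D / 2 ^ n) atTop (𝓝 0) :=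
    tendsto_const_nhds.div_atTop (tendsto_pow_atTop_atTop_of_one_lt one_lt_two)
  simpa using ge_of_tendsto' (tendsto_const_nhds.add (ENNReal.tendsto_ofReal hlim)) hbound

/-- **Dudley entropy integral bound for empirical Rademacher complexity.**
If `G` is countable, nonempty, uniformly bounded on the sample points, every covering
number `N(ε)` is finite, and `d_T(g, 0) ≤ D` for all `g ∈ G`, then
`R̂_T(G) ≤ (12/√T) ∫₀^D sqrt(log N(ε)) dε`. -/
theorem dudley_entropy_integral_bound
    {Z : Type*} (T : ℕ) (hT : 1 ≤ T) (h : Fin T → Z) (G : Set (Z → ℝ))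
    (hne : G.Nonempty) (hcount : G.Countable)
    (hbdd : ∃ B : ℝ, ∀ g ∈ G, ∀ t : Fin T, |g (h t)| ≤ B)
    (hfin : ∀ ε : ℝ, 0 < ε → coveringNumber T h G ε ≠ ⊤)
    (D : ℝ) (hD : 0 < D)
    (hdiam : ∀ g ∈ G, empDist T h g 0 ≤ D) :
    ENNReal.ofReal (empRademacher T h G)
      ≤ ENNReal.ofReal (12 / Real.sqrt (T : ℝ)) *
          ∫⁻ ε in Set.Ioc (0 : ℝ) D,
            ENNReal.ofReal (Real.sqrt (Real.log ((coveringNumber T h G ε).toNat : ℝ))) :=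
  dudley_entropy_integral_bound_general T h G hne hfin D hD hdiam
end

section
/- (Smoothness-regularized complexity bound, Theorem 3 made precise.) Fix T ≥ 1, points h_0, h_1, …, h_T ∈ ℝ^d, and set L_smooth = Σ_{t=1}^{T} ‖h_t − h_{t−1}‖₂². Let G be a nonempty countable set of functions g : ℝ^d → ℝ such that every g ∈ G is L_g-Lipschitz and satisfies |g(x)| ≤ M for all x, where L_g > 0 and M > 0. Let D ∈ (0, ∞) satisfy d_T(g, 0) ≤ D for every g ∈ G. Then the empirical Rademacher complexity of G on h_1,…,h_T satisfies R̂_T(G) ≤ (12/√T) · ∫_{0}^{D} sqrt( ( 2 L_g · sqrt( T · L_smooth ) / ε + 1 ) · log( 2M/ε + 1 ) ) dε. In particular, the bound is monotonically increasing in L_smooth, so decreasing the temporal-smoothness loss tightens the complexity bound. -/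
open MeasureTheory

/-!
Put `m = min D M` and `a = 2 L_g √(T L_smooth)`. Every `g ∈ G` yields the sequence
`v_t = g(h_{t+1})` with `Σ v_t² ≤ T m²` and increments `|v_{t+1} - v_t| ≤ L_g ‖h_{t+2} - h_{t+1}‖`,
whose sum is at most `a / 2` by Cauchy–Schwarz. Cut `{0, …, T-1}` into blocks of lengths
between `c` and `2c`. In each block, Abel summation writes `Σ σ_t v_t` as the value of `v` at
the left end times the block sum of the signs, plus the increments times tail sums of at most
`2c` signs; the left-end value is at most the root mean square of `v` on the block plus the
block's total increment. Averaging over the signs gives `R̂_T(G) ≤ m / √c + a √(2c) / T`.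
Taking `c ≈ m T / a` (or `c = T`, or using the trivial bound `R̂_T(G) ≤ m`) gives
`R̂_T(G) ≤ 3 √(m (m + a) / T)`. On `(0, m]` the integrand is at least `√(a / m + 1)`, so the
entropy integral is at least `√(m (m + a))`.
-/

open Finset

section Signs

variable {T : ℕ}

/-- Extended by `0` from `T` on, so that sums over blocks of times are sums over `Ico p q`. -/
noncomputable def rsign (σ : Fin T → Bool) (t : ℕ) : ℝ :=
  if ht : t < T then (if σ ⟨t, ht⟩ then 1 else -1) else 0

lemma rsign_mul_self (σ : Fin T → Bool) {t : ℕ} (ht : t < T) : rsign σ t * rsign σ t = 1 := by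
  simp only [rsign, dif_pos ht]
  split_ifs <;> norm_num

lemma sum_rsign_mul_rsign_of_ne {t u : ℕ} (ht : t < T) (htu : t ≠ u) :
    ∑ σ : Fin T → Bool, rsign σ t * rsign σ u = 0 := by
  let i : Fin T := ⟨t, ht⟩
  let flip := fun σ : Fin T → Bool => Function.update σ i (!σ i)
  have hflip : Function.Involutive flip := fun σ => by simp [flip]
  have hflip_t : ∀ σ, rsign (flip σ) t = -rsign σ t := by
    intro σ
    simp only [flip, rsign, dif_pos ht, show (⟨t, ht⟩ : Fin T) = i from rfl,
      Function.update_self]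
    cases σ i <;> norm_num
  have hflip_u : ∀ σ, rsign (flip σ) u = rsign σ u := by
    intro σ
    by_cases hu : u < T
    · have hui : (⟨u, hu⟩ : Fin T) ≠ i := fun h => htu (Fin.val_eq_of_eq h).symm
      simp only [flip, rsign, dif_pos hu, Function.update_of_ne hui]
    · simp only [rsign, dif_neg hu]
  have := Equiv.sum_comp (hflip.toPerm flip) fun σ => rsign σ t * rsign σ u
  simp only [Function.Involutive.coe_toPerm, hflip_t, hflip_u, neg_mul, sum_neg_distrib] at this
  linarith

lemma sum_sq_sum_rsign {S : Finset ℕ} (hS : S ⊆ range T) :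
    ∑ σ : Fin T → Bool, (∑ t ∈ S, rsign σ t) ^ 2 = 2 ^ T * #S := by
  have hdiag : ∀ t ∈ S, ∑ u ∈ S, ∑ σ : Fin T → Bool, rsign σ t * rsign σ u = 2 ^ T := by
    intro t ht
    have htT : t < T := mem_range.1 (hS ht)
    rw [sum_eq_single t (fun u _ hut => sum_rsign_mul_rsign_of_ne htT (Ne.symm hut))
      (fun h => absurd ht h)]
    simp [rsign_mul_self _ htT]
  simp_rw [sq, sum_mul_sum]
  rw [sum_comm]
  simp_rw [sum_comm (s := univ)]
  rw [sum_congr rfl hdiag, sum_const, nsmul_eq_mul, mul_comm]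

lemma sum_sqrt_sum_sq_sum_rsign_le {ι : Type*} (J : Finset ι) {S : ι → Finset ℕ}
    (hS : ∀ j ∈ J, S j ⊆ range T) :
    ∑ σ : Fin T → Bool, √(∑ j ∈ J, (∑ t ∈ S j, rsign σ t) ^ 2)
      ≤ 2 ^ T * √(∑ j ∈ J, (#(S j) : ℝ)) := by
  have hcs := Real.sum_sqrt_mul_sqrt_le (univ : Finset (Fin T → Bool)) (f := fun _ => 1)
    (g := fun σ => ∑ j ∈ J, (∑ t ∈ S j, rsign σ t) ^ 2) (fun _ => zero_le_one)
    (fun _ => sum_nonneg fun _ _ => sq_nonneg _)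
  have hcard : ∑ _σ : Fin T → Bool, (1 : ℝ) = 2 ^ T := by simp
  rw [sum_comm, sum_congr rfl fun j hj => sum_sq_sum_rsign (hS j hj), ← mul_sum] at hcs
  rw [← mul_sum, Real.sqrt_mul (by positivity), hcard, ← mul_assoc,
    Real.mul_self_sqrt (by positivity), Real.sqrt_one, one_mul] at hcs
  exact hcs

lemma sum_abs_sum_rsign_le {S : Finset ℕ} (hS : S ⊆ range T) :
    ∑ σ : Fin T → Bool, |∑ t ∈ S, rsign σ t| ≤ 2 ^ T * √(#S : ℝ) := by
  simpa [Real.sqrt_sq_eq_abs] using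
    sum_sqrt_sum_sq_sum_rsign_le {()} (S := fun _ => S) (by simpa using hS)

end Signs

lemma sum_Ico_mul_eq_abel (e v : ℕ → ℝ) {p q : ℕ} (hpq : p < q) :
    ∑ t ∈ Ico p q, e t * v t = (∑ t ∈ Ico p q, e t) * v p
      + ∑ u ∈ Ico p (q - 1), (∑ t ∈ Ico (u + 1) q, e t) * (v (u + 1) - v u) := by
  have hparts := sum_Ico_by_parts v e hpq
  have htail : ∀ u ∈ Ico p (q - 1),
      ∑ t ∈ Ico (u + 1) q, e t = ∑ t ∈ range q, e t - ∑ t ∈ range (u + 1), e t :=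
    fun u hu => sum_Ico_eq_sub _ (by have := (mem_Ico.1 hu).2; omega)
  have htele := sum_Ico_sub v (show p ≤ q - 1 by omega)
  have hsplit : ∑ u ∈ Ico p (q - 1),
      (∑ t ∈ range q, e t - ∑ t ∈ range (u + 1), e t) * (v (u + 1) - v u)
      = (∑ t ∈ range q, e t) * (v (q - 1) - v p)
        - ∑ u ∈ Ico p (q - 1), (v (u + 1) - v u) * ∑ t ∈ range (u + 1), e t := by
    rw [← htele, mul_sum, ← sum_sub_distrib]
    exact sum_congr rfl fun u _ => by ring
  simp only [smul_eq_mul] at hparts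
  rw [sum_congr rfl fun t _ => mul_comm (e t) (v t), hparts, sum_Ico_eq_sub _ hpq.le,
    sum_congr rfl fun u hu => congrArg (· * (v (u + 1) - v u)) (htail u hu), hsplit]
  ring

lemma sum_Ico_mul_le_abel (e v w : ℕ → ℝ) {p q c : ℕ} (hc : 0 < c) (hcq : c ≤ q - p)
    (hw : ∀ u, |v (u + 1) - v u| ≤ w u) :
    ∑ t ∈ Ico p q, e t * v t ≤
      √((∑ t ∈ Ico p q, v t ^ 2) / c) * |∑ t ∈ Ico p q, e t|
        + ∑ u ∈ Ico p (q - 1), (|∑ t ∈ Ico p q, e t| + |∑ t ∈ Ico (u + 1) q, e t|) * w u := by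
  have hpq : p < q := by omega
  obtain ⟨t₀, ht₀, hmin⟩ := exists_min_image (Ico p q) (fun t => v t ^ 2) ⟨p, by simpa⟩
  have hanchor : |v t₀| ≤ √((∑ t ∈ Ico p q, v t ^ 2) / c) := by
    have hcard := card_nsmul_le_sum _ _ _ hmin
    rw [Nat.card_Ico, nsmul_eq_mul] at hcard
    have hcq' : (c : ℝ) ≤ (q - p : ℕ) := by exact_mod_cast hcq
    rw [← Real.sqrt_sq_eq_abs]
    refine Real.sqrt_le_sqrt ((le_div_iff₀ (by exact_mod_cast hc)).2 ?_)
    nlinarith [sq_nonneg (v t₀)]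
  have hpath : |v p - v t₀| ≤ ∑ u ∈ Ico p (q - 1), w u := by
    have ht₀' := mem_Ico.1 ht₀
    calc |v p - v t₀| ≤ ∑ u ∈ Ico p t₀, w u := by
          simpa [Real.dist_eq] using dist_le_Ico_sum_of_dist_le (f := v) ht₀'.1
            (fun _ _ => by rw [Real.dist_eq, abs_sub_comm]; exact hw _)
      _ ≤ ∑ u ∈ Ico p (q - 1), w u :=
          sum_le_sum_of_subset_of_nonneg (Ico_subset_Ico le_rfl (by omega))
            fun u _ _ => (abs_nonneg _).trans (hw u)
  have hfirst : (∑ t ∈ Ico p q, e t) * v p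
      ≤ (√((∑ t ∈ Ico p q, v t ^ 2) / c) + ∑ u ∈ Ico p (q - 1), w u)
          * |∑ t ∈ Ico p q, e t| := by
    have hvp : |v p| ≤ √((∑ t ∈ Ico p q, v t ^ 2) / c) + ∑ u ∈ Ico p (q - 1), w u := by
      linarith [abs_sub_abs_le_abs_sub (v p) (v t₀)]
    calc (∑ t ∈ Ico p q, e t) * v p ≤ |∑ t ∈ Ico p q, e t| * |v p| := by
          rw [← abs_mul]; exact le_abs_self _
      _ ≤ _ := by rw [mul_comm]; exact mul_le_mul_of_nonneg_right hvp (abs_nonneg _)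
  have hrest : ∑ u ∈ Ico p (q - 1), (∑ t ∈ Ico (u + 1) q, e t) * (v (u + 1) - v u)
      ≤ ∑ u ∈ Ico p (q - 1), |∑ t ∈ Ico (u + 1) q, e t| * w u :=
    sum_le_sum fun u _ => (le_abs_self _).trans
      (by rw [abs_mul]; exact mul_le_mul_of_nonneg_left (hw u) (abs_nonneg _))
  rw [sum_Ico_mul_eq_abel e v hpq, sum_congr rfl fun u _ => add_mul _ _ (w u), sum_add_distrib,
    ← mul_sum]
  linear_combination hfirst + hrest

lemma sum_range_sum_Ico_eq {M : Type*} [AddCommMonoid M] (f : ℕ → M) {b : ℕ → ℕ}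
    (hb : Monotone b) (k : ℕ) :
    ∑ j ∈ range k, ∑ t ∈ Ico (b j) (b (j + 1)), f t = ∑ t ∈ Ico (b 0) (b k), f t := by
  induction k with
  | zero => simp
  | succ k ih =>
    rw [sum_range_succ, ih, sum_Ico_consecutive f (hb k.zero_le) (hb k.le_succ)]

structure IsBlocking (T c k : ℕ) (b : ℕ → ℕ) : Prop where
  zero : b 0 = 0
  last : b k = T
  mono : Monotone b
  le_length : ∀ j < k, c ≤ b (j + 1) - b j
  length_le : ∀ j < k, b (j + 1) - b j ≤ 2 * c

lemma exists_isBlocking {T c : ℕ} (hc : 0 < c) (hcT : c ≤ T) : ∃ k b, IsBlocking T c k b := by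
  have hk : 0 < T / c := Nat.div_pos hcT hc
  have hdiv : T / c * c ≤ T := Nat.div_mul_le_self T c
  have hmod : T < T / c * c + c := by
    have := Nat.div_add_mod T c
    have := Nat.mod_lt T hc
    nlinarith [Nat.mul_comm c (T / c)]
  -- blocks of length `c`, the remainder `T % c` being merged into the last one
  refine ⟨T / c, fun j => if j < T / c then j * c else T, ⟨by simp [hk], by simp, ?_, ?_, ?_⟩⟩
  · refine monotone_nat_of_le_succ fun j => ?_
    split_ifs with h₁ h₂ h₂
    · exact Nat.mul_le_mul_right c j.le_succ
    · exact (Nat.mul_le_mul_right c h₁.le).trans hdiv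
    · omega
    · exact le_rfl
  all_goals
    intro j hj
    have hsucc : (j + 1) * c = j * c + c := Nat.succ_mul j c
    by_cases h : j + 1 < T / c
    · simp only [h, hj, if_true]; omega
    · have hlast : T / c = j + 1 := by omega
      simp only [h, hj, if_true, if_false]
      rw [hlast, hsucc] at hdiv hmod
      omega

noncomputable def blockSumNorm (b : ℕ → ℕ) (k : ℕ) (e : ℕ → ℝ) : ℝ :=
  √(∑ j ∈ range k, (∑ t ∈ Ico (b j) (b (j + 1)), e t) ^ 2)

/-- Bounds the error made by freezing a sequence with increments `w` at the left end of each
block, when it is paired with `e`. -/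
noncomputable def blockTailBound (b : ℕ → ℕ) (k : ℕ) (w e : ℕ → ℝ) : ℝ :=
  ∑ j ∈ range k, ∑ u ∈ Ico (b j) (b (j + 1) - 1),
    (|∑ t ∈ Ico (b j) (b (j + 1)), e t| + |∑ t ∈ Ico (u + 1) (b (j + 1)), e t|) * w u

namespace IsBlocking

variable {T c k : ℕ} {b : ℕ → ℕ}

lemma sum_blocks (hb : IsBlocking T c k b) {M : Type*} [AddCommMonoid M] (f : ℕ → M) :
    ∑ j ∈ range k, ∑ t ∈ Ico (b j) (b (j + 1)), f t = ∑ t ∈ range T, f t := by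
  rw [sum_range_sum_Ico_eq f hb.mono, hb.zero, hb.last, range_eq_Ico]

lemma succ_le (hb : IsBlocking T c k b) {j : ℕ} (hj : j < k) : b (j + 1) ≤ T :=
  hb.last ▸ hb.mono hj

lemma sum_sum_Ico_pred_le (hb : IsBlocking T c k b) {w : ℕ → ℝ} (hw : ∀ u, 0 ≤ w u) :
    ∑ j ∈ range k, ∑ u ∈ Ico (b j) (b (j + 1) - 1), w u ≤ ∑ u ∈ range (T - 1), w u := by
  have hmono : Monotone fun j => min (b j) (T - 1) :=
    fun i j hij => min_le_min_right _ (hb.mono hij)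
  calc ∑ j ∈ range k, ∑ u ∈ Ico (b j) (b (j + 1) - 1), w u
      ≤ ∑ j ∈ range k, ∑ u ∈ Ico (min (b j) (T - 1)) (min (b (j + 1)) (T - 1)), w u := by
        refine sum_le_sum fun j hj => sum_le_sum_of_subset_of_nonneg ?_ fun u _ _ => hw u
        have := hb.succ_le (mem_range.1 hj)
        exact Ico_subset_Ico (min_le_left _ _) (by omega)
    _ = ∑ u ∈ range (T - 1), w u := by
        rw [sum_range_sum_Ico_eq w hmono, hb.zero, hb.last, range_eq_Ico]
        simp

lemma sum_mul_le (hb : IsBlocking T c k b) (hc : 0 < c) (e v w : ℕ → ℝ)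
    (hw : ∀ u, |v (u + 1) - v u| ≤ w u) :
    ∑ t ∈ range T, e t * v t
      ≤ √((∑ t ∈ range T, v t ^ 2) / c) * blockSumNorm b k e + blockTailBound b k w e := by
  have hcs := Real.sum_sqrt_mul_sqrt_le (range k)
    (f := fun j => (∑ t ∈ Ico (b j) (b (j + 1)), v t ^ 2) / c)
    (g := fun j => (∑ t ∈ Ico (b j) (b (j + 1)), e t) ^ 2)
    (fun _ => by positivity) (fun _ => sq_nonneg _)
  simp only [Real.sqrt_sq_eq_abs, ← sum_div, hb.sum_blocks] at hcs
  rw [← hb.sum_blocks, blockTailBound]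
  refine (sum_le_sum fun j hj => sum_Ico_mul_le_abel e v w hc
    (hb.le_length j (mem_range.1 hj)) hw).trans ?_
  rw [sum_add_distrib]
  exact add_le_add_left hcs _

lemma sum_abs_sum_rsign_Ico_le (hb : IsBlocking T c k b) {j p : ℕ} (hj : j < k)
    (hp : b j ≤ p) :
    ∑ σ : Fin T → Bool, |∑ t ∈ Ico p (b (j + 1)), rsign σ t| ≤ 2 ^ T * √(2 * c) := by
  refine (sum_abs_sum_rsign_le fun t ht =>
    mem_range.2 ((mem_Ico.1 ht).2.trans_le (hb.succ_le hj))).trans ?_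
  have := hb.length_le j hj
  gcongr
  rw [Nat.card_Ico]
  exact_mod_cast (by omega : b (j + 1) - p ≤ 2 * c)

lemma sum_blockSumNorm_rsign_le (hb : IsBlocking T c k b) :
    ∑ σ : Fin T → Bool, blockSumNorm b k (rsign σ) ≤ 2 ^ T * √T := by
  have hT : ∑ j ∈ range k, (#(Ico (b j) (b (j + 1))) : ℝ) = T := by
    simpa using hb.sum_blocks fun _ => (1 : ℝ)
  have := sum_sqrt_sum_sq_sum_rsign_le (T := T) (range k) (S := fun j => Ico (b j) (b (j + 1)))
    fun j hj t ht => mem_range.2 ((mem_Ico.1 ht).2.trans_le (hb.succ_le (mem_range.1 hj)))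
  rwa [hT] at this

lemma sum_blockTailBound_rsign_le (hb : IsBlocking T c k b) {w : ℕ → ℝ} (hw : ∀ u, 0 ≤ w u) :
    ∑ σ : Fin T → Bool, blockTailBound b k w (rsign σ)
      ≤ 2 ^ T * (2 * √(2 * c) * ∑ u ∈ range (T - 1), w u) := by
  have hterm : ∀ j ∈ range k, ∀ u ∈ Ico (b j) (b (j + 1) - 1),
      ∑ σ : Fin T → Bool, (|∑ t ∈ Ico (b j) (b (j + 1)), rsign σ t|
        + |∑ t ∈ Ico (u + 1) (b (j + 1)), rsign σ t|) * w u
      ≤ 2 ^ T * (2 * √(2 * c)) * w u := by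
    intro j hj u hu
    have hj := mem_range.1 hj
    rw [← sum_mul, sum_add_distrib]
    gcongr
    · exact hw u
    · linarith [hb.sum_abs_sum_rsign_Ico_le hj le_rfl,
        hb.sum_abs_sum_rsign_Ico_le (p := u + 1) hj (by linarith [(mem_Ico.1 hu).1])]
  calc ∑ σ : Fin T → Bool, blockTailBound b k w (rsign σ)
      ≤ ∑ j ∈ range k, ∑ u ∈ Ico (b j) (b (j + 1) - 1), 2 ^ T * (2 * √(2 * c)) * w u := by
        unfold blockTailBound
        rw [sum_comm]
        refine sum_le_sum fun j hj => ?_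
        rw [sum_comm]
        exact sum_le_sum (hterm j hj)
    _ ≤ 2 ^ T * (2 * √(2 * c) * ∑ u ∈ range (T - 1), w u) := by
        simp only [← mul_sum, ← mul_assoc]
        gcongr
        exact hb.sum_sum_Ico_pred_le hw

end IsBlocking

noncomputable def seqRademacher (T : ℕ) {ι : Type*} (v : ι → ℕ → ℝ) : ℝ :=
  ((2 : ℝ) ^ T)⁻¹ * ∑ σ : Fin T → Bool, ⨆ i, (1 / (T : ℝ)) * ∑ t ∈ range T, rsign σ t * v i t

lemma empRademacher_eq_seqRademacher {Z : Type*} (T : ℕ) (x : ℕ → Z) (G : Set (Z → ℝ)) :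
    empRademacher T (fun t : Fin T => x t) G
      = seqRademacher T fun (g : G) t => (g : Z → ℝ) (x t) := by
  unfold empRademacher seqRademacher
  congr 1
  refine sum_congr rfl fun σ _ => iSup_congr fun g => ?_
  rw [← Fin.sum_univ_eq_sum_range (fun t => rsign σ t * (g : Z → ℝ) (x t))]
  simp [rsign]

section SeqRademacher

variable {T : ℕ} {ι : Type*} [Nonempty ι] {v : ι → ℕ → ℝ} {m : ℝ}

lemma seqRademacher_le_of_forall_le {F : (Fin T → Bool) → ℝ}
    (hF : ∀ σ i, ∑ t ∈ range T, rsign σ t * v i t ≤ F σ) :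
    seqRademacher T v ≤ ((2 : ℝ) ^ T)⁻¹ * ∑ σ, F σ / T := by
  unfold seqRademacher
  gcongr with σ
  exact ciSup_le fun i => by rw [one_div_mul_eq_div]; gcongr; exact hF σ i

lemma seqRademacher_le (hm : 0 ≤ m) (hv : ∀ i, ∑ t ∈ range T, v i t ^ 2 ≤ T * m ^ 2) :
    seqRademacher T v ≤ m := by
  refine (seqRademacher_le_of_forall_le (F := fun _ => T * m) fun σ i => ?_).trans ?_
  · have hsign : ∑ t ∈ range T, rsign σ t ^ 2 = T := by
      simp [sum_congr rfl fun t ht => (sq _).trans (rsign_mul_self σ (mem_range.1 ht))]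
    calc ∑ t ∈ range T, rsign σ t * v i t
        ≤ √(∑ t ∈ range T, rsign σ t ^ 2) * √(∑ t ∈ range T, v i t ^ 2) :=
          Real.sum_mul_le_sqrt_mul_sqrt _ _ _
      _ ≤ √T * √(T * m ^ 2) := by rw [hsign]; gcongr; exact hv i
      _ = T * m := by
          rw [Real.sqrt_mul (Nat.cast_nonneg T), Real.sqrt_sq hm, ← mul_assoc,
            Real.mul_self_sqrt (Nat.cast_nonneg T)]
  · rcases T.eq_zero_or_pos with rfl | hT
    · simpa using hm
    · have : (T : ℝ) ≠ 0 := by positivity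
      simp [field]

lemma seqRademacher_le_blocks {w : ℕ → ℝ} {a : ℝ} {c : ℕ} (hc : 0 < c) (hcT : c ≤ T)
    (hm : 0 ≤ m) (hv : ∀ i, ∑ t ∈ range T, v i t ^ 2 ≤ T * m ^ 2)
    (hw : ∀ i u, |v i (u + 1) - v i u| ≤ w u) (hwa : 2 * ∑ u ∈ range (T - 1), w u ≤ a) :
    seqRademacher T v ≤ m / √c + a * √(2 * c) / T := by
  obtain ⟨k, b, hb⟩ := exists_isBlocking hc hcT
  have hw0 : ∀ u, 0 ≤ w u := fun u => (abs_nonneg _).trans (hw (Classical.arbitrary ι) u)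
  have hT : (0 : ℝ) < T := by exact_mod_cast hc.trans_le hcT
  have hA : ∀ i, √((∑ t ∈ range T, v i t ^ 2) / c) ≤ m * √T / √c := fun i => by
    rw [← Real.sqrt_sq hm, ← Real.sqrt_mul (sq_nonneg m), ← Real.sqrt_div' _ (Nat.cast_nonneg c),
      mul_comm]
    gcongr
    exact hv i
  refine (seqRademacher_le_of_forall_le (F := fun σ =>
      m * √T / √c * blockSumNorm b k (rsign σ) + blockTailBound b k w (rsign σ))
    fun σ i => (hb.sum_mul_le hc (rsign σ) (v i) w (hw i)).trans
      (add_le_add_left (mul_le_mul_of_nonneg_right (hA i) (Real.sqrt_nonneg _)) _)).trans ?_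
  have hsum : ∑ σ : Fin T → Bool,
      (m * √T / √c * blockSumNorm b k (rsign σ) + blockTailBound b k w (rsign σ))
      ≤ 2 ^ T * (T * m / √c + a * √(2 * c)) := by
    have hsT : m * √(T : ℝ) / √c * √T = T * m / √c := by
      rw [div_mul_eq_mul_div, mul_assoc, Real.mul_self_sqrt hT.le, mul_comm m]
    have hwa' : 2 * √(2 * c) * ∑ u ∈ range (T - 1), w u ≤ a * √(2 * c) := by
      rw [mul_right_comm]
      exact mul_le_mul_of_nonneg_right hwa (Real.sqrt_nonneg _)
    have := mul_le_mul_of_nonneg_left hb.sum_blockSumNorm_rsign_le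
      (by positivity : 0 ≤ m * √(T : ℝ) / √c)
    have := hb.sum_blockTailBound_rsign_le hw0
    have := mul_le_mul_of_nonneg_left hwa' (by positivity : (0 : ℝ) ≤ 2 ^ T)
    rw [sum_add_distrib, ← mul_sum, ← hsT]
    linarith
  rw [← sum_div, ← mul_div_assoc, div_le_iff₀ hT, inv_mul_le_iff₀ (by positivity)]
  refine hsum.trans (le_of_eq ?_)
  field_simp

lemma seqRademacher_le_of_lt_of_le {w : ℕ → ℝ} {a : ℝ} (hm : 0 < m) (hma : m < a)
    (haT : a ≤ m * T) (hv : ∀ i, ∑ t ∈ range T, v i t ^ 2 ≤ T * m ^ 2)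
    (hw : ∀ i u, |v i (u + 1) - v i u| ≤ w u) (hwa : 2 * ∑ u ∈ range (T - 1), w u ≤ a) :
    seqRademacher T v ≤ 3 * √(a * m) / √T := by
  have ha : 0 < a := hm.trans hma
  set c := ⌈m * T / a⌉₊
  have hc_ge : m * T ≤ c * a := (div_le_iff₀ ha).1 (Nat.le_ceil _)
  have hc_le : (c : ℝ) * a ≤ 2 * (m * T) := by
    have : 1 ≤ m * T / a := (one_le_div ha).2 haT
    refine (le_div_iff₀ ha).1 ?_
    rw [mul_div_assoc]
    linarith [Nat.ceil_lt_add_one (by positivity : 0 ≤ m * T / a)]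
  have hT : (0 : ℝ) < T := by nlinarith
  have hc : 0 < c := Nat.ceil_pos.2 (by positivity)
  have hcT : c ≤ T := Nat.ceil_le.2 ((div_le_iff₀ ha).2 (by nlinarith))
  have hsT : 0 < √(T : ℝ) := Real.sqrt_pos.2 hT
  have hc' : (0 : ℝ) < c := by exact_mod_cast hc
  have hfirst : m / √c ≤ √(a * m) / √T := by
    rw [div_le_div_iff₀ (Real.sqrt_pos.2 hc') hsT, ← Real.sqrt_mul (by positivity)]
    refine Real.le_sqrt_of_sq_le ?_
    rw [mul_pow, Real.sq_sqrt hT.le]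
    nlinarith
  have hsecond : a * √(2 * c) / T ≤ 2 * √(a * m) / √T := by
    rw [div_le_div_iff₀ hT hsT]
    refine (pow_le_pow_iff_left₀ (by positivity) (by positivity) two_ne_zero).1 ?_
    rw [mul_pow, mul_pow, mul_pow, mul_pow, Real.sq_sqrt (by positivity),
      Real.sq_sqrt (by positivity), Real.sq_sqrt (by positivity)]
    nlinarith [mul_le_mul_of_nonneg_left hc_le (by positivity : (0 : ℝ) ≤ 2 * a * T)]
  calc seqRademacher T v ≤ m / √c + a * √(2 * c) / T :=
        seqRademacher_le_blocks hc hcT hm.le hv hw hwa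
    _ ≤ √(a * m) / √T + 2 * √(a * m) / √T := add_le_add hfirst hsecond
    _ = 3 * √(a * m) / √T := by ring

lemma seqRademacher_le_sqrt {w : ℕ → ℝ} {a : ℝ} (hT : 0 < T) (hm : 0 < m)
    (hv : ∀ i, ∑ t ∈ range T, v i t ^ 2 ≤ T * m ^ 2)
    (hw : ∀ i u, |v i (u + 1) - v i u| ≤ w u) (hwa : 2 * ∑ u ∈ range (T - 1), w u ≤ a) :
    seqRademacher T v ≤ 3 * √(m * (m + a)) / √T := by
  have ha : 0 ≤ a := le_trans (mul_nonneg zero_le_two (sum_nonneg fun u _ =>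
    (abs_nonneg _).trans (hw (Classical.arbitrary ι) u))) hwa
  have hT' : (0 : ℝ) < T := by exact_mod_cast hT
  have hsT : 0 < √(T : ℝ) := Real.sqrt_pos.2 hT'
  rcases le_or_gt a m with ham | hma
  · have hs2 : √(2 : ℝ) ≤ 2 := Real.sqrt_le_iff.2 ⟨zero_le_two, by norm_num⟩
    have hmle : m ≤ √(m * (m + a)) := Real.le_sqrt_of_sq_le (by nlinarith)
    have e : a * √(2 * T) / T = √2 * a / √T := by
      rw [Real.sqrt_mul zero_le_two, div_eq_div_iff hT'.ne' hsT.ne', mul_assoc, mul_assoc,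
        Real.mul_self_sqrt hT'.le]
      ring
    refine (seqRademacher_le_blocks hT le_rfl hm.le hv hw hwa).trans ?_
    rw [e, ← add_div, div_le_div_iff_of_pos_right hsT]
    nlinarith [Real.sqrt_nonneg (2 : ℝ)]
  rcases le_or_gt a (m * T) with haT | hTa
  · refine (seqRademacher_le_of_lt_of_le hm hma haT hv hw hwa).trans ?_
    gcongr 3 * ?_ / _
    exact Real.sqrt_le_sqrt (by nlinarith)
  · refine (seqRademacher_le hm.le hv).trans ?_
    rw [le_div_iff₀ hsT]
    have : m * √T ≤ √(m * (m + a)) :=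
      Real.le_sqrt_of_sq_le (by rw [mul_pow, Real.sq_sqrt hT'.le]; nlinarith)
    nlinarith [Real.sqrt_nonneg (m * (m + a))]

end SeqRademacher

lemma sum_sq_le_of_empDist_zero_le {Z : Type*} {T : ℕ} (hT : 0 < T) {x : ℕ → Z} {g : Z → ℝ}
    {D : ℝ} (hD : empDist T (fun t : Fin T => x t) g 0 ≤ D) :
    ∑ t ∈ range T, g (x t) ^ 2 ≤ T * D ^ 2 := by
  have hT' : (0 : ℝ) < T := by exact_mod_cast hT
  simp only [empDist, Pi.zero_apply, sub_zero, one_div, Real.sqrt_le_iff,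
    inv_mul_le_iff₀ hT'] at hD
  rw [← Fin.sum_univ_eq_sum_range (fun t => g (x t) ^ 2)]
  exact hD.2

lemma sum_range_norm_sub_le {E : Type*} [SeminormedAddCommGroup E] (h : ℕ → E) (T : ℕ) :
    ∑ u ∈ range (T - 1), ‖h (u + 2) - h (u + 1)‖
      ≤ √(T * ∑ t ∈ range T, ‖h (t + 1) - h t‖ ^ 2) := by
  refine Real.le_sqrt_of_sq_le ((sq_sum_le_card_mul_sum_sq ..).trans ?_)
  rcases T with _ | n
  · simp
  · rw [card_range, sum_range_succ' _ n]
    push_cast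
    gcongr
    · linarith
    · exact le_add_of_nonneg_right (sq_nonneg _)

lemma one_le_log_two_mul_div_add_one {M ε : ℝ} (hε : 0 < ε) (hεM : ε ≤ M) :
    1 ≤ Real.log (2 * M / ε + 1) := by
  have h3 : (3 : ℝ) ≤ 2 * M / ε + 1 := by
    have : 2 ≤ 2 * M / ε := (le_div_iff₀ hε).2 (by linarith)
    linarith
  linarith [Real.log_le_log (by norm_num) h3, Real.log_three_gt_d9]

lemma ofReal_sqrt_le_lintegral {a M D m : ℝ} (ha : 0 ≤ a) (hm : 0 < m) (hmD : m ≤ D)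
    (hmM : m ≤ M) :
    ENNReal.ofReal √(m * (m + a))
      ≤ ∫⁻ ε in Set.Ioc 0 D, ENNReal.ofReal √((a / ε + 1) * Real.log (2 * M / ε + 1)) := by
  have hpt : ∀ ε ∈ Set.Ioc 0 m, ENNReal.ofReal √(a / m + 1)
      ≤ ENNReal.ofReal √((a / ε + 1) * Real.log (2 * M / ε + 1)) := by
    rintro ε ⟨hε, hεm⟩
    have hdiv : a / m ≤ a / ε := div_le_div_of_nonneg_left ha hε hεm
    have hlog := one_le_log_two_mul_div_add_one hε (hεm.trans hmM)
    gcongr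
    nlinarith [div_nonneg ha hε.le]
  calc ENNReal.ofReal √(m * (m + a))
      = ENNReal.ofReal √(a / m + 1) * volume (Set.Ioc 0 m) := by
        rw [Real.volume_Ioc, sub_zero, ← ENNReal.ofReal_mul (Real.sqrt_nonneg _),
          ← Real.sqrt_sq hm.le, ← Real.sqrt_mul (by positivity), Real.sqrt_sq hm.le]
        congr 2
        field_simp
        ring
    _ = ∫⁻ _ in Set.Ioc 0 m, ENNReal.ofReal √(a / m + 1) := (setLIntegral_const _ _).symm
    _ ≤ ∫⁻ ε in Set.Ioc 0 m, ENNReal.ofReal √((a / ε + 1) * Real.log (2 * M / ε + 1)) :=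
        setLIntegral_mono' measurableSet_Ioc hpt
    _ ≤ _ := lintegral_mono_set (Set.Ioc_subset_Ioc_right hmD)

theorem smoothness_regularized_complexity_bound_general
    {d : ℕ} (T : ℕ) (hT : 1 ≤ T) (h : ℕ → EuclideanSpace ℝ (Fin d))
    (G : Set (EuclideanSpace ℝ (Fin d) → ℝ)) (hne : G.Nonempty)
    (Lg M : ℝ) (hLg : 0 < Lg) (hM : 0 < M)
    (hLip : ∀ g ∈ G, ∀ x y : EuclideanSpace ℝ (Fin d), |g x - g y| ≤ Lg * ‖x - y‖)
    (hBdd : ∀ g ∈ G, ∀ x : EuclideanSpace ℝ (Fin d), |g x| ≤ M)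
    (D : ℝ) (hD : 0 < D)
    (hdiam : ∀ g ∈ G, empDist T (fun t : Fin T => h (t + 1)) g 0 ≤ D) :
    ENNReal.ofReal (empRademacher T (fun t : Fin T => h (t + 1)) G)
      ≤ ENNReal.ofReal (12 / Real.sqrt (T : ℝ)) *
          ∫⁻ ε in Set.Ioc (0 : ℝ) D,
            ENNReal.ofReal (Real.sqrt
              ((2 * Lg * Real.sqrt ((T : ℝ) *
                    ∑ t ∈ Finset.range T, ‖h (t + 1) - h t‖ ^ 2) / ε + 1)
                * Real.log (2 * M / ε + 1))) := by
  set a := 2 * Lg * √(T * ∑ t ∈ range T, ‖h (t + 1) - h t‖ ^ 2)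
  set m := min D M
  have hm : 0 < m := lt_min hD hM
  have : Nonempty G := hne.to_subtype
  have hv : ∀ g : G, ∑ t ∈ range T, (g : _ → ℝ) (h (t + 1)) ^ 2 ≤ T * m ^ 2 := by
    intro ⟨g, hg⟩
    rcases min_choice D M with hmin | hmin <;> rw [show m = _ from hmin]
    · exact sum_sq_le_of_empDist_zero_le hT (hdiam g hg)
    · refine (sum_le_sum fun t _ => sq_le_sq' (abs_le.1 (hBdd g hg _)).1
        (abs_le.1 (hBdd g hg _)).2).trans (by simp)
  have hw : ∀ (g : G) u, |(g : _ → ℝ) (h (u + 1 + 1)) - (g : _ → ℝ) (h (u + 1))|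
      ≤ Lg * ‖h (u + 2) - h (u + 1)‖ := fun g u => hLip g g.2 _ _
  have hwa : 2 * ∑ u ∈ range (T - 1), Lg * ‖h (u + 2) - h (u + 1)‖ ≤ a := by
    rw [← mul_sum, ← mul_assoc]
    exact mul_le_mul_of_nonneg_left (sum_range_norm_sub_le h T) (by positivity)
  have hR := seqRademacher_le_sqrt hT hm hv hw hwa
  rw [← empRademacher_eq_seqRademacher T (fun t => h (t + 1)) G] at hR
  calc ENNReal.ofReal (empRademacher T (fun t : Fin T => h (t + 1)) G)
      ≤ ENNReal.ofReal (12 / √T * √(m * (m + a))) := by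
        refine ENNReal.ofReal_le_ofReal (hR.trans ?_)
        rw [div_mul_eq_mul_div]
        gcongr
        linarith [Real.sqrt_nonneg (m * (m + a))]
    _ ≤ _ := by
        rw [ENNReal.ofReal_mul (by positivity)]
        gcongr
        exact ofReal_sqrt_le_lintegral (by positivity) hm (min_le_left _ _) (min_le_right _ _)

/-- **Smoothness-regularized complexity bound.** For a trajectory
`h_0, …, h_T` in `ℝ^d` with `L_smooth = Σ_{t=1}^T ‖h_t − h_{t−1}‖²` and a countable
nonempty class `G` of `L_g`-Lipschitz functions bounded by `M`, with `d_T(g,0) ≤ D` for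
all `g ∈ G`, the empirical Rademacher complexity of `G` on `h_1, …, h_T` satisfies
`R̂_T(G) ≤ (12/√T) ∫₀^D sqrt( (2L_g √(T·L_smooth)/ε + 1) · log(2M/ε + 1) ) dε`. -/
theorem smoothness_regularized_complexity_bound
    {d : ℕ} (T : ℕ) (hT : 1 ≤ T) (h : ℕ → EuclideanSpace ℝ (Fin d))
    (G : Set (EuclideanSpace ℝ (Fin d) → ℝ)) (hne : G.Nonempty) (hcount : G.Countable)
    (Lg M : ℝ) (hLg : 0 < Lg) (hM : 0 < M)
    (hLip : ∀ g ∈ G, ∀ x y : EuclideanSpace ℝ (Fin d), |g x - g y| ≤ Lg * ‖x - y‖)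
    (hBdd : ∀ g ∈ G, ∀ x : EuclideanSpace ℝ (Fin d), |g x| ≤ M)
    (D : ℝ) (hD : 0 < D)
    (hdiam : ∀ g ∈ G, empDist T (fun t : Fin T => h (t + 1)) g 0 ≤ D) :
    ENNReal.ofReal (empRademacher T (fun t : Fin T => h (t + 1)) G)
      ≤ ENNReal.ofReal (12 / Real.sqrt (T : ℝ)) *
          ∫⁻ ε in Set.Ioc (0 : ℝ) D,
            ENNReal.ofReal (Real.sqrt
              ((2 * Lg * Real.sqrt ((T : ℝ) *
                    ∑ t ∈ Finset.range T, ‖h (t + 1) - h t‖ ^ 2) / ε + 1)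
                * Real.log (2 * M / ε + 1))) :=
  smoothness_regularized_complexity_bound_general T hT h G hne Lg M hLg hM hLip hBdd D hD hdiam
end
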